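/- arXiv:2002.02480 — 10 statements merged into one kernel-verified Lean document; each statement's English description precedes it below -/
import Mathlib

section
/- For any infinite cardinal κ, the colouring Δ_κ : [2^κ]² → κ has no monochromatic odd cycles: there is no odd k ≥ 3 and injective sequence x_0, ..., x_{k-1} of functions κ → 2 such that Δ(x_i, x_{i+1}) (indices mod k) takes a single constant value. -/
/-
At the colour `i`, consecutive points of a monochromatic cycle disagree at coordinate `i`, so
along the cycle the bit at `i` alternates. Going once around a cycle of length `k` flips it `k`
times and returns it to its starting value, so `k` is even.
-/

/-- `i` is the least point of disagreement between `x` and `y`. -/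
def IsDelta {κ : Type*} [LinearOrder κ] (x y : κ → Bool) (i : κ) : Prop :=
  x i ≠ y i ∧ ∀ j, j < i → x j = y j

theorem ZMod.apply_natCast_eq_iterate {α : Type*} {k : ℕ} (f : ZMod k → α) (g : α → α)
    (hstep : ∀ j, f (j + 1) = g (f j)) (n : ℕ) : f n = g^[n] (f 0) := by
  induction n with
  | zero => simp
  | succ n ih => rw [Nat.cast_succ, hstep, ih, Function.iterate_succ_apply']

theorem ZMod.even_of_forall_add_one_ne {k : ℕ} (f : ZMod k → Bool)
    (hstep : ∀ j, f (j + 1) ≠ f j) : Even k := by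
  have hflip : ∀ j, f (j + 1) = !f j := fun j => Bool.eq_not.mpr (hstep j)
  by_contra hodd
  have hcycle := ZMod.apply_natCast_eq_iterate f (!·) hflip k
  rw [ZMod.natCast_self, Bool.involutive_not.iterate_odd (Nat.not_even_iff_odd.mp hodd)] at hcycle
  exact Bool.self_ne_not _ hcycle

theorem stmt1_general {κ : Type*} [LinearOrder κ] :
    ¬ ∃ (k : ℕ), 3 ≤ k ∧ Odd k ∧ ∃ (x : ZMod k → (κ → Bool)) (i : κ),
      Function.Injective x ∧ ∀ j : ZMod k, IsDelta (x j) (x (j + 1)) i := by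
  rintro ⟨k, -, hodd, x, i, -, hdelta⟩
  have heven : Even k :=
    ZMod.even_of_forall_add_one_ne (fun j => x j i) fun j => (hdelta j).1.symm
  exact Nat.not_even_iff_odd.mpr hodd heven

/-- The colouring `Δ_κ` on `[2^κ]²` has no monochromatic odd cycles. -/
theorem stmt1 {κ : Type*} [LinearOrder κ] [WellFoundedLT κ] [Infinite κ] :
    ¬ ∃ (k : ℕ), 3 ≤ k ∧ Odd k ∧ ∃ (x : ZMod k → (κ → Bool)) (i : κ),
      Function.Injective x ∧ ∀ j : ZMod k, IsDelta (x j) (x (j + 1)) i :=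
  stmt1_general
end

section
/- For any Δ-regressive colouring c : [2^{ω+1}]² → ω+1 (i.e., c(x,y) < Δ(x,y) whenever Δ(x,y) > 0), there exists m < ω such that for every k ≥ 3, c has a monochromatic cycle of colour m and length k. -/
open Function

section BipartiteCycles

variable {α : Type*} {R : α → α → Prop} {k : ℕ}

theorem exists_cycle_of_path [NeZero k] (f : ℕ → α) (hf : Set.InjOn f (Set.Iio k))
    (hstep : ∀ i, i + 1 < k → R (f i) (f (i + 1))) (hclose : R (f (k - 1)) (f 0)) :
    ∃ x : ZMod k → α, Injective x ∧ ∀ j, R (x j) (x (j + 1)) := by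
  refine ⟨fun j => f j.val,
    fun i j h => ZMod.val_injective k (hf (ZMod.val_lt i) (ZMod.val_lt j) h), fun j => ?_⟩
  have hval : (j + 1).val = (j.val + 1) % k := by
    rw [ZMod.val_add, ZMod.val_one_eq_one_mod, Nat.add_mod_mod]
  simp only [hval]
  rcases Nat.lt_or_ge (j.val + 1) k with hj | hj
  · rw [Nat.mod_eq_of_lt hj]
    exact hstep _ hj
  · replace hj : j.val + 1 = k := le_antisymm (ZMod.val_lt j) hj
    rw [hj, Nat.mod_self, show j.val = k - 1 by omega]
    exact hclose

variable {S : Set α} {side : α → Bool}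

theorem exists_injective_side_eq (hS : ∀ b, {x ∈ S | side x = b}.Infinite) (σ : ℕ → Bool)
    {F : Set α} (hF : F.Finite) :
    ∃ f : ℕ → α, Injective f ∧ (∀ i, f i ∈ S) ∧ (∀ i, side (f i) = σ i) ∧
      ∀ i, f i ∉ F := by
  let e b := ((hS b).sdiff hF).natEmbedding
  have he_side b n : side (e b n) = b := (e b n).2.1.2
  have he_inj b b' n n' (h : (e b n : α) = e b' n') : n = n' := by
    obtain rfl : b = b' := by rw [← he_side b n, ← he_side b' n', h]
    exact (e b).injective (Subtype.ext h)
  exact ⟨fun i => e (σ i) i, fun i j h => he_inj _ _ i j h, fun i => (e _ i).2.1.1,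
    fun i => he_side _ i, fun i => (e _ i).2.2⟩

theorem exists_cycle_of_even (hR : ∀ x ∈ S, ∀ y ∈ S, side x ≠ side y → R x y)
    (hS : ∀ b, {x ∈ S | side x = b}.Infinite) (hk : Even k) (hk0 : k ≠ 0) :
    ∃ x : ZMod k → α, Injective x ∧ ∀ j, R (x j) (x (j + 1)) := by
  have : NeZero k := ⟨hk0⟩
  obtain ⟨f, hf, hfS, hfside, -⟩ := exists_injective_side_eq hS (fun i => decide (Even i))
    Set.finite_empty
  refine exists_cycle_of_path f hf.injOn (fun i _ => hR _ (hfS _) _ (hfS _) ?_)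
    (hR _ (hfS _) _ (hfS _) ?_)
  · by_cases h : Even i <;> simp [hfside, h, Nat.even_add_one]
  · have : ¬ Even (k - 1) := by
      rw [Nat.even_sub (Nat.one_le_iff_ne_zero.mpr hk0)]
      simp [hk]
    simp [hfside, this]

theorem exists_cycle_of_odd (hR : ∀ x ∈ S, ∀ y ∈ S, side x ≠ side y → R x y)
    (hS : ∀ b, {x ∈ S | side x = b}.Infinite) {u v : α} (hu : u ∈ S) (hv : v ∈ S)
    (huv : u ≠ v) (hside : side u = side v) (hRuv : R u v) (hk : Odd k) (hk3 : 3 ≤ k) :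
    ∃ x : ZMod k → α, Injective x ∧ ∀ j, R (x j) (x (j + 1)) := by
  have : NeZero k := ⟨by omega⟩
  obtain ⟨g, hg, hgS, hgside, hguv⟩ := exists_injective_side_eq hS
    (fun i => xor (side u) (decide (Even i))) (Set.toFinite {u, v})
  obtain ⟨p, hp0, hp1, hp2⟩ :
      ∃ p : ℕ → α, p 0 = u ∧ p 1 = v ∧ ∀ i, p (i + 2) = g i :=
    ⟨fun | 0 => u | 1 => v | i + 2 => g i, rfl, rfl, fun _ => rfl⟩
  have hp : Injective p := by
    have hgu i : g i ≠ u := fun h => hguv i (Or.inl h)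
    have hgv i : g i ≠ v := fun h => hguv i (Or.inr h)
    rintro (_ | _ | i) (_ | _ | j) h <;> simp_all [hg.eq_iff]
  refine exists_cycle_of_path p hp.injOn ?_ ?_
  · rintro (_ | _ | i) hi
    · simpa [hp0, hp1] using hRuv
    · rw [hp1, hp2]
      exact hR _ hv _ (hgS 0) (by simp [hgside, ← hside])
    · rw [hp2, hp2]
      refine hR _ (hgS _) _ (hgS _) ?_
      by_cases h : Even i <;> simp [hgside, h, Nat.even_add_one]
  · obtain ⟨r, rfl⟩ := hk
    obtain ⟨s, rfl⟩ : ∃ s, r = s + 1 := ⟨r - 1, by omega⟩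
    rw [show 2 * (s + 1) + 1 - 1 = 2 * s + 2 by omega, hp2, hp0]
    exact hR _ (hgS _) _ hu (by simp [hgside])

end BipartiteCycles

namespace RegressiveColouring

def vanishingBelow (n : ℕ) : Set (WithTop ℕ → Bool) :=
  {x | ∀ i < (n : WithTop ℕ), x i = false}

theorem vanishingBelow_anti {m n : ℕ} (h : m ≤ n) : vanishingBelow n ⊆ vanishingBelow m :=
  fun _ hx i hi => hx i (hi.trans_le (by exact_mod_cast h))

theorem infinite_vanishingBelow_sep (n : ℕ) (b : Bool) :
    {x ∈ vanishingBelow n | x n = b}.Infinite := by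
  let f (j : ℕ) : WithTop ℕ → Bool := fun i =>
    if i = n then b else decide (i = ↑(n + 1 + j))
  refine Set.infinite_of_injective_forall_mem (f := f) (fun j j' h => ?_) fun j => ⟨?_, ?_⟩
  · have := congrFun h ↑(n + 1 + j)
    simp only [f, Nat.cast_inj, if_neg (show n + 1 + j ≠ n by omega)] at this
    simpa using this
  · intro i hi
    have hij : i ≠ ↑(n + 1 + j) :=
      (hi.trans (by exact_mod_cast (by omega : n < n + 1 + j))).ne
    simp only [f, if_neg hi.ne, decide_eq_false hij]
  · simp [f]

theorem eq_of_le_of_lt_coe_add_one {a : WithTop ℕ} {m : ℕ} (h₁ : (m : WithTop ℕ) ≤ a)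
    (h₂ : a < ((m + 1 : ℕ) : WithTop ℕ)) : a = m := by
  lift a to ℕ using h₂.ne_top
  simp only [← Nat.cast_withTop, Nat.cast_le, Nat.cast_lt, Nat.cast_inj] at *
  omega

def ColoursAtLeast (c : (WithTop ℕ → Bool) → (WithTop ℕ → Bool) → WithTop ℕ) (m : ℕ) :
    Prop :=
  ∀ x ∈ vanishingBelow (m + 1), ∀ y ∈ vanishingBelow (m + 1), x ≠ y →
    (m : WithTop ℕ) ≤ c x y

variable {c : (WithTop ℕ → Bool) → (WithTop ℕ → Bool) → WithTop ℕ}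

theorem coloursAtLeast_zero : ColoursAtLeast c 0 := by
  simp [ColoursAtLeast]

variable (hreg : ∀ x y i, x ≠ y → IsDelta x y i → 0 < i → c x y < i)
include hreg

theorem exists_not_coloursAtLeast : ∃ m, ¬ ColoursAtLeast c m := by
  let x : WithTop ℕ → Bool := fun _ => false
  let y : WithTop ℕ → Bool := fun i => decide (i = ⊤)
  have hxy : x ≠ y := fun h => by simpa [x, y] using congrFun h ⊤
  have hΔ : IsDelta x y ⊤ := ⟨by simp [x, y], fun j hj => by simp [x, y, hj.ne]⟩
  obtain ⟨n, hn⟩ := WithTop.ne_top_iff_exists.mp (hreg x y ⊤ hxy hΔ (by simp)).ne_top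
  refine ⟨n + 1, fun h => ?_⟩
  have := h x (fun _ _ => rfl) y (fun i hi => by simp [y, hi.ne_top]) hxy
  rw [← hn, ← Nat.cast_withTop] at this
  exact n.not_succ_le_self (by exact_mod_cast this)

theorem eq_of_coloursAtLeast {m : ℕ} (hm : ColoursAtLeast c m) {x y : WithTop ℕ → Bool}
    (hx : x ∈ vanishingBelow (m + 1)) (hy : y ∈ vanishingBelow (m + 1))
    (hxy : x (m + 1 : ℕ) ≠ y (m + 1 : ℕ)) : c x y = m := by
  have hne : x ≠ y := fun h => hxy (by rw [h])
  have hΔ : IsDelta x y (m + 1 : ℕ) := ⟨hxy, fun j hj => by rw [hx j hj, hy j hj]⟩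
  exact eq_of_le_of_lt_coe_add_one (hm x hx y hy hne)
    (hreg x y _ hne hΔ (by exact_mod_cast m.succ_pos))

theorem exists_coloursAtLeast_and_edge : ∃ m, ColoursAtLeast c m ∧
    ∃ u ∈ vanishingBelow (m + 2), ∃ v ∈ vanishingBelow (m + 2), u ≠ v ∧ c u v = m := by
  obtain ⟨m, hm, hm'⟩ : ∃ m, ColoursAtLeast c m ∧ ¬ ColoursAtLeast c (m + 1) := by
    by_contra! h
    obtain ⟨n, hn⟩ := exists_not_coloursAtLeast hreg
    exact hn (Nat.rec coloursAtLeast_zero h n)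
  simp only [ColoursAtLeast, not_forall, not_le] at hm'
  obtain ⟨u, hu, v, hv, huv, hlt⟩ := hm'
  have hsub := vanishingBelow_anti (show m + 1 ≤ m + 2 by omega)
  exact ⟨m, hm, u, hu, v, hv, huv,
    eq_of_le_of_lt_coe_add_one (hm u (hsub hu) v (hsub hv) huv) (by exact_mod_cast hlt)⟩

end RegressiveColouring

open RegressiveColouring in
theorem stmt3_general (c : (WithTop ℕ → Bool) → (WithTop ℕ → Bool) → WithTop ℕ)
    (hreg : ∀ x y i, x ≠ y → IsDelta x y i → 0 < i → c x y < i) :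
    ∃ m : ℕ, ∀ k : ℕ, 3 ≤ k → ∃ x : ZMod k → (WithTop ℕ → Bool),
      Function.Injective x ∧ ∀ j : ZMod k, c (x j) (x (j + 1)) = (m : WithTop ℕ) := by
  obtain ⟨m, hm, u, hu, v, hv, huv, hcuv⟩ := exists_coloursAtLeast_and_edge hreg
  have hR : ∀ x ∈ vanishingBelow (m + 1), ∀ y ∈ vanishingBelow (m + 1),
      x (m + 1 : ℕ) ≠ y (m + 1 : ℕ) → c x y = m :=
    fun x hx y hy => eq_of_coloursAtLeast hreg hm hx hy
  have hS := infinite_vanishingBelow_sep (m + 1)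
  refine ⟨m, fun k hk => ?_⟩
  rcases Nat.even_or_odd k with hk' | hk'
  · exact exists_cycle_of_even hR hS hk' (by omega)
  · have hlt : ((m + 1 : ℕ) : WithTop ℕ) < (m + 2 : ℕ) := by
      exact_mod_cast (m + 1).lt_succ_self
    have hsub := vanishingBelow_anti (show m + 1 ≤ m + 2 by omega)
    exact exists_cycle_of_odd hR hS (hsub hu) (hsub hv) huv (by rw [hu _ hlt, hv _ hlt]) hcuv
      hk' hk

/-- Any `Δ`-regressive colouring on `[2^{ω+1}]²` (the ordinal `ω+1` is modelled by
`WithTop ℕ`) has, for some fixed colour `m < ω`, monochromatic cycles of colour `m`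
of every length `k ≥ 3`. -/
theorem stmt3 (c : (WithTop ℕ → Bool) → (WithTop ℕ → Bool) → WithTop ℕ)
    (hsymm : ∀ x y, c x y = c y x)
    (hreg : ∀ x y i, x ≠ y → IsDelta x y i → 0 < i → c x y < i) :
    ∃ m : ℕ, ∀ k : ℕ, 3 ≤ k → ∃ x : ZMod k → (WithTop ℕ → Bool),
      Function.Injective x ∧ ∀ j : ZMod k, c (x j) (x (j + 1)) = (m : WithTop ℕ) :=
  stmt3_general c hreg
end

section
/- Let c : [2^{ω+1}]² → ω+1 be Δ-regressive, and suppose that for every m < ω there is some length k_m ≥ 3 such that c has no monochromatic cycle of colour m and length k_m. Then for every m ≥ 1 and all distinct f, g ∈ 2^{ω+1} with Δ(f,g) ≥ m, one has c(f,g) ≥ m − 1. -/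
theorem IsDelta.ne {κ : Type*} [LinearOrder κ] {x y : κ → Bool} {i : κ} (h : IsDelta x y i) :
    x ≠ y :=
  fun hxy => h.1 (congrFun hxy i)

theorem WithTop.eq_of_coe_le_of_lt_coe_succ {a : WithTop ℕ} {n : ℕ} (h₁ : (n : WithTop ℕ) ≤ a)
    (h₂ : a < ((n + 1 : ℕ) : WithTop ℕ)) : a = n :=
  le_antisymm ((ENat.lt_add_one_iff (ENat.natCast_ne_top n)).1 (by exact_mod_cast h₂)) h₁

theorem WithTop.exists_injective_coe_lt_ne (N : ℕ) (i : WithTop ℕ) :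
    ∃ t : ℕ → WithTop ℕ, Function.Injective t ∧ ∀ j, (N : WithTop ℕ) < t j ∧ t j ≠ i := by
  have hS : ({p : WithTop ℕ | (N : WithTop ℕ) < p} \ {i}).Infinite := by
    refine Set.Infinite.sdiff ?_ (Set.finite_singleton i)
    refine ((Set.Ioi_infinite N).image WithTop.coe_injective.injOn).mono ?_
    rintro _ ⟨p, hp, rfl⟩
    exact WithTop.coe_lt_coe.2 hp
  exact ⟨fun j => hS.natEmbedding _ j, Subtype.val_injective.comp (hS.natEmbedding _).injective,
    fun j => (hS.natEmbedding _ j).2⟩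

theorem exists_injective_zmod_cycle {V : Type*} (R : V → V → Prop) (k : ℕ) [NeZero k]
    (x : ℕ → V) (hx : Set.InjOn x (Set.Iio k)) (hR : ∀ j < k, R (x j) (x ((j + 1) % k))) :
    ∃ y : ZMod k → V, Function.Injective y ∧ ∀ j, R (y j) (y (j + 1)) := by
  refine ⟨fun j => x j.val, fun a b h => ZMod.val_injective k
    (hx (ZMod.val_lt a) (ZMod.val_lt b) h), fun j => ?_⟩
  have hsucc : (j + 1).val = (j.val + 1) % k := by
    rw [ZMod.val_add, ZMod.val_one_eq_one_mod, Nat.add_mod_mod]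
  simpa only [hsucc] using hR j.val (ZMod.val_lt j)

section CycleVertex

variable {κ : Type*} [LinearOrder κ] (f g : κ → Bool) (N : κ) (t : ℕ → κ) (k : ℕ)

/-- With the parity `Odd (j + k)`, bit `N` changes along every edge `j → (j + 1) % k` except
`f → g` for odd `k`, including the closing edge `k - 1 → 0`. -/
def cycleVertex (j : ℕ) : κ → Bool :=
  if j = 0 then f
  else if j = 1 ∧ Odd k then g
  else Function.update (Function.update f (t j) (!f (t j))) N (xor (f N) (decide (Odd (j + k))))

variable {f g N t k}

theorem cycleVertex_apply_of_lt (hg : ∀ p ≤ N, g p = f p) (htN : ∀ j, N < t j) (j : ℕ)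
    {p : κ} (hp : p < N) : cycleVertex f g N t k j p = f p := by
  unfold cycleVertex
  split_ifs
  · rfl
  · exact hg p hp.le
  · rw [Function.update_of_ne hp.ne, Function.update_of_ne (hp.trans (htN j)).ne]

theorem cycleVertex_apply_self (hg : ∀ p ≤ N, g p = f p) (j : ℕ) :
    cycleVertex f g N t k j N = xor (f N) (decide (j ≠ 0 ∧ Odd (j + k))) := by
  unfold cycleVertex
  split_ifs with h₀ h₁
  · simp [h₀]
  · obtain ⟨rfl, hk⟩ := h₁
    simp [hg N le_rfl, Nat.odd_add_one, add_comm 1 k, hk]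
  · simp [h₀]

@[simp]
theorem cycleVertex_zero : cycleVertex f g N t k 0 = f := rfl

theorem cycleVertex_of_odd (hk : Odd k) : cycleVertex f g N t k 1 = g := by
  simp [cycleVertex, hk]

theorem cycleVertex_apply_tag (htN : ∀ j, N < t j) {j : ℕ} (h₀ : j ≠ 0)
    (h₁ : ¬(j = 1 ∧ Odd k)) : cycleVertex f g N t k j (t j) = !f (t j) := by
  rw [cycleVertex, if_neg h₀, if_neg h₁, Function.update_of_ne (htN j).ne',
    Function.update_self]

theorem cycleVertex_apply_tag_of_ne (ht : Function.Injective t) (htN : ∀ j, N < t j) {j l : ℕ}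
    (hlj : l ≠ j) (h₁ : ¬(l = 1 ∧ Odd k)) : cycleVertex f g N t k l (t j) = f (t j) := by
  unfold cycleVertex
  split_ifs
  · rfl
  · rw [Function.update_of_ne (htN j).ne', Function.update_of_ne (ht.ne hlj.symm)]

theorem cycleVertex_apply_of_ne {i : κ} (hNi : N ≠ i) (hti : ∀ j, t j ≠ i) {l : ℕ}
    (h₁ : ¬(l = 1 ∧ Odd k)) : cycleVertex f g N t k l i = f i := by
  unfold cycleVertex
  split_ifs
  · rfl
  · rw [Function.update_of_ne hNi.symm, Function.update_of_ne (hti l).symm]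

section Injective

variable {i : κ} (hfg : f i ≠ g i) (hNi : N ≠ i) (ht : Function.Injective t)
  (htN : ∀ j, N < t j) (hti : ∀ j, t j ≠ i)
include hfg hNi ht htN hti

theorem cycleVertex_ne {u v : ℕ} (huv : u ≠ v) (hv₀ : v ≠ 0) (hv₁ : ¬(v = 1 ∧ Odd k)) :
    cycleVertex f g N t k u ≠ cycleVertex f g N t k v := by
  intro h
  by_cases hu₁ : u = 1 ∧ Odd k
  · have h' := congrFun h i
    rw [hu₁.1, cycleVertex_of_odd hu₁.2, cycleVertex_apply_of_ne hNi hti hv₁] at h'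
    exact hfg h'.symm
  · have h' := congrFun h (t v)
    rw [cycleVertex_apply_tag_of_ne ht htN huv hu₁, cycleVertex_apply_tag htN hv₀ hv₁] at h'
    exact Bool.not_ne_self _ h'.symm

theorem cycleVertex_injective : Function.Injective (cycleVertex f g N t k) := by
  intro u v h
  by_contra huv
  by_cases hv : v ≠ 0 ∧ ¬(v = 1 ∧ Odd k)
  · exact cycleVertex_ne hfg hNi ht htN hti huv hv.1 hv.2 h
  by_cases hu : u ≠ 0 ∧ ¬(u = 1 ∧ Odd k)
  · exact cycleVertex_ne hfg hNi ht htN hti (Ne.symm huv) hu.1 hu.2 h.symm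
  have hfg' : f ≠ g := fun h' => hfg (congrFun h' i)
  push Not at hu hv
  rcases eq_or_ne u 0 with rfl | hu₀
  · obtain ⟨rfl, hk⟩ := hv (Ne.symm huv)
    rw [cycleVertex_zero, cycleVertex_of_odd hk] at h
    exact hfg' h
  · obtain ⟨rfl, hk⟩ := hu hu₀
    obtain rfl : v = 0 := by_contra fun hv₀ => huv (hv hv₀).1.symm
    rw [cycleVertex_zero, cycleVertex_of_odd hk] at h
    exact hfg' h.symm

end Injective

theorem isDelta_cycleVertex_succ (hg : ∀ p ≤ N, g p = f p) (htN : ∀ j, N < t j) {j : ℕ}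
    (hj : j < k) (hj₀ : ¬(j = 0 ∧ Odd k)) :
    IsDelta (cycleVertex f g N t k j) (cycleVertex f g N t k ((j + 1) % k)) N := by
  refine ⟨?_, fun p hp => ?_⟩
  · rw [cycleVertex_apply_self hg, cycleVertex_apply_self hg, Ne, Bool.xor_right_inj,
      decide_eq_decide]
    simp only [Nat.odd_iff] at hj₀ ⊢
    rcases Nat.lt_or_ge (j + 1) k with hj₁ | hj₁
    · rw [Nat.mod_eq_of_lt hj₁]
      omega
    · rw [show j + 1 = k by omega, Nat.mod_self]
      omega
  · rw [cycleVertex_apply_of_lt hg htN _ hp, cycleVertex_apply_of_lt hg htN _ hp]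

end CycleVertex

theorem exists_injective_cycle_of_isDelta {κ : Type*} [LinearOrder κ]
    (R : (κ → Bool) → (κ → Bool) → Prop) {N : κ} (hR : ∀ x y, IsDelta x y N → R x y)
    {f g : κ → Bool} {i : κ} (hfg : IsDelta f g i) (hNi : N < i) (hRfg : R f g) {t : ℕ → κ}
    (ht : Function.Injective t) (htN : ∀ j, N < t j) (hti : ∀ j, t j ≠ i) {k : ℕ} (hk : 2 ≤ k) :
    ∃ x : ZMod k → (κ → Bool), Function.Injective x ∧ ∀ j, R (x j) (x (j + 1)) := by
  have : NeZero k := ⟨by omega⟩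
  have hg : ∀ p ≤ N, g p = f p := fun p hp => (hfg.2 p (hp.trans_lt hNi)).symm
  refine exists_injective_zmod_cycle R k (cycleVertex f g N t k)
    (cycleVertex_injective hfg.1 hNi.ne ht htN hti).injOn fun j hj => ?_
  by_cases hj₀ : j = 0 ∧ Odd k
  · rwa [hj₀.1, Nat.mod_eq_of_lt hk, cycleVertex_zero, cycleVertex_of_odd hj₀.2]
  · exact hR _ _ (isDelta_cycleVertex_succ hg htN hj hj₀)

section Colouring

variable {c : (WithTop ℕ → Bool) → (WithTop ℕ → Bool) → WithTop ℕ}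
  (hreg : ∀ x y i, x ≠ y → IsDelta x y i → 0 < i → c x y < i)
include hreg

theorem colour_eq_of_isDelta {n : ℕ}
    (hlow : ∀ x y, IsDelta x y ((n + 1 : ℕ) : WithTop ℕ) → (n : WithTop ℕ) ≤ c x y) {x y}
    (h : IsDelta x y ((n + 1 : ℕ) : WithTop ℕ)) : c x y = n :=
  WithTop.eq_of_coe_le_of_lt_coe_succ (hlow x y h)
    (hreg x y _ h.ne h (by exact_mod_cast n.succ_pos))

theorem coe_le_colour_of_isDelta
    (hnc : ∀ m : ℕ, ∃ k : ℕ, 2 ≤ k ∧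
      ¬ ∃ x : ZMod k → (WithTop ℕ → Bool), Function.Injective x ∧
        ∀ j : ZMod k, c (x j) (x (j + 1)) = (m : WithTop ℕ)) (n : ℕ) :
    ∀ f g i, IsDelta f g i → ((n + 1 : ℕ) : WithTop ℕ) ≤ i → (n : WithTop ℕ) ≤ c f g := by
  induction n with
  | zero => simp
  | succ n ih =>
    intro f g i hfg hi
    by_contra! hc
    have hNi : ((n + 1 : ℕ) : WithTop ℕ) < i :=
      lt_of_lt_of_le (by exact_mod_cast (n + 1).lt_succ_self) hi
    obtain ⟨k, hk, hno⟩ := hnc n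
    obtain ⟨t, ht, htN⟩ := WithTop.exists_injective_coe_lt_ne (n + 1) i
    refine hno (exists_injective_cycle_of_isDelta (fun x y => c x y = n)
      (fun x y => colour_eq_of_isDelta hreg fun x y h => ih x y _ h le_rfl) hfg hNi
      (WithTop.eq_of_coe_le_of_lt_coe_succ (ih f g i hfg hNi.le) hc) ht
      (fun j => (htN j).1) (fun j => (htN j).2) hk)

end Colouring

theorem stmt4_general (c : (WithTop ℕ → Bool) → (WithTop ℕ → Bool) → WithTop ℕ)
    (hreg : ∀ x y i, x ≠ y → IsDelta x y i → 0 < i → c x y < i)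
    (hnc : ∀ m : ℕ, ∃ k : ℕ, 3 ≤ k ∧
      ¬ ∃ x : ZMod k → (WithTop ℕ → Bool), Function.Injective x ∧
        ∀ j : ZMod k, c (x j) (x (j + 1)) = (m : WithTop ℕ)) :
    ∀ m : ℕ, 1 ≤ m → ∀ f g i, f ≠ g → IsDelta f g i → (m : WithTop ℕ) ≤ i →
      ((m - 1 : ℕ) : WithTop ℕ) ≤ c f g := by
  intro m hm f g i _ hfg hi
  obtain ⟨n, rfl⟩ : ∃ n, m = n + 1 := ⟨m - 1, by omega⟩
  exact coe_le_colour_of_isDelta hreg (fun m => (hnc m).imp fun _ hk => ⟨by omega, hk.2⟩)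
    n f g i hfg hi

/-- If `c` is a `Δ`-regressive colouring on `[2^{ω+1}]²` (the ordinal `ω+1` is modelled
by `WithTop ℕ`) such that for every colour `m < ω` there is a length `k_m ≥ 3` with no
monochromatic cycle of colour `m` and length `k_m`, then for every `m ≥ 1` and distinct
`f, g` with `Δ(f,g) ≥ m` one has `c(f,g) ≥ m - 1`. -/
theorem stmt4 (c : (WithTop ℕ → Bool) → (WithTop ℕ → Bool) → WithTop ℕ)
    (hsymm : ∀ x y, c x y = c y x)
    (hreg : ∀ x y i, x ≠ y → IsDelta x y i → 0 < i → c x y < i)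
    (hnc : ∀ m : ℕ, ∃ k : ℕ, 3 ≤ k ∧
      ¬ ∃ x : ZMod k → (WithTop ℕ → Bool), Function.Injective x ∧
        ∀ j : ZMod k, c (x j) (x (j + 1)) = (m : WithTop ℕ)) :
    ∀ m : ℕ, 1 ≤ m → ∀ f g i, f ≠ g → IsDelta f g i → (m : WithTop ℕ) ≤ i →
      ((m - 1 : ℕ) : WithTop ℕ) ≤ c f g :=
  stmt4_general c hreg hnc
end

section
/- If μ < κ are infinite cardinals with 2^μ = 2^κ, then there is a colouring c : [2^κ]² → κ with no monochromatic odd cycles such that c(x,y) < max{Δ(x,y), μ} for all distinct x, y ∈ 2^κ. -/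
/-- `c` has a monochromatic odd cycle. -/
def HasMonoOddCycle {X C : Type*} (c : X → X → C) : Prop :=
  ∃ k : ℕ, 3 ≤ k ∧ Odd k ∧ ∃ x : ZMod k → X, Function.Injective x ∧
    ∃ m : C, ∀ j : ZMod k, c (x j) (x (j + 1)) = m

open Cardinal Set

noncomputable def diffPoint {μ : Type*} [Nonempty μ] (u v : μ → Bool) : μ :=
  Classical.epsilon fun m => u m ≠ v m

section diffPoint

variable {μ : Type*} [Nonempty μ]

lemma diffPoint_comm (u v : μ → Bool) : diffPoint u v = diffPoint v u := by
  simp only [diffPoint, ne_comm]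

lemma apply_diffPoint_ne {u v : μ → Bool} (h : u ≠ v) : u (diffPoint u v) ≠ v (diffPoint u v) :=
  Classical.epsilon_spec (Function.ne_iff.mp h)

end diffPoint

lemma ZMod.not_forall_apply_add_one_eq_not {k : ℕ} (hk : Odd k) (b : ZMod k → Bool) :
    ¬ ∀ j, b (j + 1) = !b j := by
  intro hb
  have h_even : ∀ n : ℕ, b (2 * n : ℕ) = b 0 := by
    intro n
    induction n with
    | zero => simp
    | succ n ih =>
      rw [show ((2 * (n + 1) : ℕ) : ZMod k) = (2 * n : ℕ) + 1 + 1 by push_cast; ring,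
        hb, hb, Bool.not_not, ih]
  obtain ⟨n, rfl⟩ := hk
  have h_wrap := hb (2 * n : ℕ)
  rw [← Nat.cast_add_one, ZMod.natCast_self, h_even] at h_wrap
  exact Bool.eq_not_self _ |>.mp h_wrap

lemma HasMonoOddCycle.of_comp {X C D : Type*} {c : X → X → C} {g : C → D}
    (hg : Function.Injective g) (h : HasMonoOddCycle fun x y => g (c x y)) :
    HasMonoOddCycle c := by
  obtain ⟨k, hk3, hk, x, hx, m, hm⟩ := h
  exact ⟨k, hk3, hk, x, hx, c (x 0) (x 1), fun j => hg <| by simpa using (hm j).trans (hm 0).symm⟩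

lemma not_hasMonoOddCycle_diffPoint {X μ : Type*} [Nonempty μ] {e : X → μ → Bool}
    (he : Function.Injective e) : ¬ HasMonoOddCycle fun x y => diffPoint (e x) (e y) := by
  rintro ⟨k, hk3, hk, x, hx, m, hm⟩
  have : Fact (1 < k) := ⟨by omega⟩
  refine ZMod.not_forall_apply_add_one_eq_not hk (fun j => e (x j) m) fun j => ?_
  have h_ne : e (x j) ≠ e (x (j + 1)) := he.ne <| hx.ne <| by simp
  have h_diff := apply_diffPoint_ne h_ne
  rw [show diffPoint (e (x j)) (e (x (j + 1))) = m from hm j] at h_diff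
  exact Bool.eq_not_iff.mpr h_diff.symm

lemma le_mk_setOf_mk_Iio_lt {κ : Type u} [LinearOrder κ] [WellFoundedLT κ] {c : Cardinal.{u}}
    (hc : c ≤ #κ) : c ≤ #{a : κ | #(Iio a) < c} := by
  set S := {a : κ | #(Iio a) < c}
  by_contra! hS
  have h_compl : Sᶜ.Nonempty := by
    by_contra! h
    rw [compl_empty_iff.mp h, mk_univ] at hS
    exact hS.not_ge hc
  obtain ⟨a, ha, ha_min⟩ := WellFounded.has_min wellFounded_lt _ h_compl
  have h_Iio : Iio a ⊆ S := fun t ht => by_contra fun h => ha_min t h ht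
  exact ha ((mk_le_mk_of_subset h_Iio).trans_lt hS)

theorem stmt5_general {κ μ : Type u} [LinearOrder κ] [WellFoundedLT κ] [Infinite μ]
    (hlt : Cardinal.mk μ < Cardinal.mk κ)
    (hpow : (2 : Cardinal) ^ Cardinal.mk μ = 2 ^ Cardinal.mk κ) :
    ∃ c : (κ → Bool) → (κ → Bool) → κ,
      (∀ x y, c x y = c y x) ∧
      (∀ x y i, x ≠ y → IsDelta x y i →
        c x y < i ∨ Cardinal.mk (Set.Iio (c x y)) < Cardinal.mk μ) ∧
      ¬ HasMonoOddCycle c := by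
  obtain ⟨e⟩ : Nonempty ((κ → Bool) ↪ (μ → Bool)) := by
    rw [← le_def]
    simp [hpow]
  obtain ⟨g⟩ : Nonempty (μ ↪ {a : κ | #(Iio a) < #μ}) := by
    rw [← le_def]
    exact le_mk_setOf_mk_Iio_lt hlt.le
  refine ⟨fun x y => g (diffPoint (e x) (e y)), fun x y => by simp only [diffPoint_comm],
    fun x y i _ _ => Or.inr (g _).2, fun h => ?_⟩
  exact not_hasMonoOddCycle_diffPoint e.injective
    (h.of_comp (Subtype.val_injective.comp g.injective))

/-- If `μ < κ` are infinite cardinals (here: `κ` is a well-ordered type which is an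
initial ordinal, `μ` an infinite type with `#μ < #κ`) and `2^μ = 2^κ`, then there is an
almost `Δ`-regressive colouring on `[2^κ]²`, witnessed by `μ` (i.e.
`c(x,y) < max {Δ(x,y), μ}`, that is, `c(x,y) < Δ(x,y)` or `c(x,y) < μ` as an ordinal),
with no monochromatic odd cycles. -/
theorem stmt5 {κ μ : Type u} [LinearOrder κ] [WellFoundedLT κ] [Infinite μ]
    (hseg : ∀ a : κ, Cardinal.mk (Set.Iio a) < Cardinal.mk κ)
    (hlt : Cardinal.mk μ < Cardinal.mk κ)
    (hpow : (2 : Cardinal) ^ Cardinal.mk μ = 2 ^ Cardinal.mk κ) :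
    ∃ c : (κ → Bool) → (κ → Bool) → κ,
      (∀ x y, c x y = c y x) ∧
      (∀ x y i, x ≠ y → IsDelta x y i →
        c x y < i ∨ Cardinal.mk (Set.Iio (c x y)) < Cardinal.mk μ) ∧
      ¬ HasMonoOddCycle c :=
  stmt5_general hlt hpow
end

section
/- Suppose κ is an uncountable cardinal with 2^μ < 2^κ for all μ < κ, and c : [2^κ]² → κ satisfies c(x,y) < max{Δ(x,y), μ₀} for all distinct x,y, for some fixed μ₀ < κ. Then c has a monochromatic odd cycle. -/
/-!
If no colour class contains an odd cycle, every colour class is bipartite. Choosing a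
2-colouring of the class of each colour `m` and collecting them gives
`F : (κ → Bool) → (κ → Bool)` with `F x (c x y) ≠ F y (c x y)`, hence
`Δ(F x, F y) ≤ c(x, y) < Δ(x, y)` as long as `μ₀ ≤ Δ(x, y)`. Iterating, two distinct points are
eventually separated below `μ₀`, so `x ↦ (n ↦ F^[n] x ↾ μ₀)` injects `2^κ` into
`2^(|μ₀| · ℵ₀) < 2^κ`.
-/

namespace SimpleGraph

variable {V : Type*} {G : SimpleGraph V}

variable (G) in
def HasOddCycle : Prop :=
  ∃ k : ℕ, 3 ≤ k ∧ Odd k ∧ ∃ y : ZMod k → V, Function.Injective y ∧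
    ∀ j : ZMod k, G.Adj (y j) (y (j + 1))

variable (G) in
def IsWalkSeq (n : ℕ) (x : ℕ → V) : Prop :=
  ∀ i < n, G.Adj (x i) (x (i + 1))

lemma IsWalkSeq.shift {n s d : ℕ} {x : ℕ → V} (hx : G.IsWalkSeq n x) (hsd : s + d ≤ n) :
    G.IsWalkSeq d (fun i => x (s + i)) :=
  fun i hi => hx (s + i) (by omega)

lemma IsWalkSeq.excise {n s d : ℕ} {x : ℕ → V} (hx : G.IsWalkSeq n x) (hsd : s + d ≤ n)
    (hloop : x s = x (s + d)) :
    G.IsWalkSeq (n - d) (fun i => if i ≤ s then x i else x (i + d)) := by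
  intro i hi
  rcases lt_trichotomy i s with h | rfl | h
  · simpa [h.le, Nat.succ_le_of_lt h] using hx i (by omega)
  · simpa [hloop, Nat.add_right_comm] using hx (i + d) (by omega)
  · simpa [h.not_ge, (Nat.lt_succ_of_lt h).not_ge, Nat.add_right_comm] using hx (i + d) (by omega)

lemma hasOddCycle_of_injOn {n : ℕ} {x : ℕ → V} (hn : Odd n) (hx : G.IsWalkSeq n x)
    (hclosed : x n = x 0) (hinj : Set.InjOn x (Set.Iio n)) : G.HasOddCycle := by
  have hn3 : 3 ≤ n := by
    obtain ⟨m, rfl⟩ := hn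
    rcases m with _ | m
    · exact absurd (hclosed ▸ hx 0 one_pos) G.irrefl
    · omega
  have : NeZero n := ⟨by omega⟩
  refine ⟨n, hn3, hn, fun j => x j.val, fun a b hab => ZMod.val_injective n
    (hinj (ZMod.val_lt a) (ZMod.val_lt b) hab), fun j => ?_⟩
  have hval : (j + 1).val = (j.val + 1) % n := by
    rw [ZMod.val_add, ZMod.val_one'' (by omega)]
  have hj := ZMod.val_lt j
  change G.Adj (x j.val) (x (j + 1).val)
  rcases (show j.val + 1 ≤ n from hj).lt_or_eq with h | h
  · rw [hval, Nat.mod_eq_of_lt h]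
    exact hx _ hj
  · rw [hval, h, Nat.mod_self, ← hclosed]
    simpa [h] using hx _ hj

theorem hasOddCycle_of_odd_closed_walk {n : ℕ} {x : ℕ → V} (hn : Odd n)
    (hx : G.IsWalkSeq n x) (hclosed : x n = x 0) : G.HasOddCycle := by
  induction n using Nat.strong_induction_on generalizing x with
  | _ n ih =>
  by_cases hinj : Set.InjOn x (Set.Iio n)
  · exact hasOddCycle_of_injOn hn hx hclosed hinj
  obtain ⟨s, t, hst, htn, hxst⟩ : ∃ s t, s < t ∧ t < n ∧ x s = x t := by
    simp only [Set.InjOn, Set.mem_Iio, not_forall] at hinj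
    obtain ⟨a, ha, b, hb, hab, hne⟩ := hinj
    rcases Nat.lt_or_gt_of_ne hne with h | h
    · exact ⟨a, b, h, hb, hab⟩
    · exact ⟨b, a, h, ha, hab.symm⟩
  obtain ⟨d, rfl⟩ := Nat.exists_eq_add_of_lt hst
  -- Cut the walk at the repeated vertex into the loop `x s, …, x t` and the rest:
  -- one of the two closed walks is odd and shorter.
  rcases Nat.even_or_odd (d + 1) with hd | hd
  · refine ih (n - (d + 1)) (by omega) (Nat.Odd.sub_even (by omega) hn hd)
      (hx.excise (s := s) (d := d + 1) (by omega) (by rwa [← Nat.add_assoc])) ?_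
    simp [show ¬ n - (d + 1) ≤ s by omega, show n - (d + 1) + (d + 1) = n by omega, hclosed]
  · exact ih (d + 1) (by omega) hd (hx.shift (s := s) (by omega))
      (by simpa [← Nat.add_assoc] using hxst.symm)

theorem colorable_two_of_not_hasOddCycle (h : ¬ G.HasOddCycle) : G.Colorable 2 := by
  refine two_colorable_iff_forall_loop_even.2 fun u w => ?_
  by_contra hodd
  exact h (hasOddCycle_of_odd_closed_walk (x := w.getVert) (Nat.not_even_iff_odd.1 hodd)
    (fun i hi => w.adj_getVert_succ hi) (by simp))

end SimpleGraph

lemma hasMonoOddCycle_of_hasOddCycle_fromRel {X C : Type*} {c : X → X → C}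
    (hsymm : ∀ x y, c x y = c y x) {m : C}
    (h : (SimpleGraph.fromRel fun x y => c x y = m).HasOddCycle) : HasMonoOddCycle c := by
  obtain ⟨k, hk, hodd, y, hinj, hadj⟩ := h
  refine ⟨k, hk, hodd, y, hinj, m, fun j => ?_⟩
  obtain ⟨-, h | h⟩ := hadj j
  exacts [h, hsymm .. ▸ h]

section Delta

variable {κ : Type*} [LinearOrder κ]

lemma IsDelta.le_of_ne {x y : κ → Bool} {i j : κ} (h : IsDelta x y i) (hj : x j ≠ y j) :
    i ≤ j :=
  not_lt.1 fun hji => hj (h.2 j hji)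

variable [WellFoundedLT κ]

lemma exists_isDelta {x y : κ → Bool} (h : x ≠ y) : ∃ i, IsDelta x y i := by
  have hne : {i | x i ≠ y i}.Nonempty := Function.ne_iff.1 h
  exact ⟨wellFounded_lt.min _ hne, wellFounded_lt.min_mem _ hne,
    fun j hj => not_not.1 fun hxy => wellFounded_lt.not_lt_min _ hxy hj⟩

theorem injective_iterate_restrict (F : (κ → Bool) → κ → Bool) (c : (κ → Bool) → (κ → Bool) → κ)
    (μ₀ : κ) (hF : ∀ x y, x ≠ y → F x (c x y) ≠ F y (c x y))
    (hreg : ∀ x y i, x ≠ y → IsDelta x y i → c x y < i ∨ c x y < μ₀) :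
    Function.Injective fun x (n : ℕ) (j : Set.Iio μ₀) => F^[n] x j := by
  suffices h : ∀ i x y, x ≠ y → IsDelta x y i → ∃ n, ∃ j < μ₀, F^[n] x j ≠ F^[n] y j by
    intro x y hxy
    by_contra hne
    obtain ⟨i, hi⟩ := exists_isDelta hne
    obtain ⟨n, j, hj, hn⟩ := h i x y hne hi
    exact hn (congr_fun (congr_fun hxy n) ⟨j, hj⟩)
  intro i
  induction i using WellFoundedLT.induction with
  | _ i ih =>
  intro x y hxy hi
  by_cases hiμ : i < μ₀
  · exact ⟨0, i, hiμ, hi.1⟩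
  have hci : c x y < i := (hreg x y i hxy hi).elim id fun h => h.trans_le (not_lt.1 hiμ)
  have hFxy : F x ≠ F y := fun h => hF x y hxy (congr_fun h _)
  obtain ⟨i', hi'⟩ := exists_isDelta hFxy
  obtain ⟨n, j, hj, hn⟩ := ih i' ((hi'.le_of_ne (hF x y hxy)).trans_lt hci) _ _ hFxy hi'
  exact ⟨n + 1, j, hj, by simpa only [Function.iterate_succ_apply] using hn⟩

end Delta

open Cardinal in
lemma mk_nat_arrow_arrow_bool_lt {α κ : Type u} (hκ : ℵ₀ < #κ) (hα : #α < #κ)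
    (hpow : ∀ μ : Cardinal.{u}, μ < #κ → (2 : Cardinal) ^ μ < (2 : Cardinal) ^ #κ) :
    #(ℕ → α → Bool) < #(κ → Bool) := by
  calc #(ℕ → α → Bool) = 2 ^ (#α * ℵ₀) := by simp [power_mul]
    _ < 2 ^ #κ := hpow _ (mul_lt_of_lt hκ.le hα hκ)
    _ = #(κ → Bool) := by simp

/-- Suppose `κ` is an uncountable cardinal (a well-ordered uncountable type which is
an initial ordinal) with `2^μ < 2^κ` for all cardinals `μ < κ`, and
`c : [2^κ]² → κ` satisfies `c(x,y) < max {Δ(x,y), μ₀}` for a fixed `μ₀ < κ`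
(i.e. `c(x,y) < Δ(x,y)` or `c(x,y) < μ₀`). Then `c` has a monochromatic odd cycle. -/
theorem stmt6 {κ : Type u} [LinearOrder κ] [WellFoundedLT κ] [Uncountable κ]
    (hseg : ∀ a : κ, Cardinal.mk (Set.Iio a) < Cardinal.mk κ)
    (hpow : ∀ μ : Cardinal.{u}, μ < Cardinal.mk κ → (2 : Cardinal) ^ μ < (2 : Cardinal) ^ Cardinal.mk κ)
    (c : (κ → Bool) → (κ → Bool) → κ) (hsymm : ∀ x y, c x y = c y x)
    (μ₀ : κ)
    (hreg : ∀ x y i, x ≠ y → IsDelta x y i → c x y < i ∨ c x y < μ₀) :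
    HasMonoOddCycle c := by
  by_contra hno
  have hcol (m : κ) : (SimpleGraph.fromRel fun x y => c x y = m).Colorable 2 :=
    SimpleGraph.colorable_two_of_not_hasOddCycle fun h =>
      hno (hasMonoOddCycle_of_hasOddCycle_fromRel hsymm h)
  let col (m : κ) := SimpleGraph.recolorOfEquiv _ finTwoEquiv (hcol m).some
  have hsep (x y) (hxy : x ≠ y) : col (c x y) x ≠ col (c x y) y :=
    (col _).valid (by simp [hxy])
  have hinj := injective_iterate_restrict (fun x m => col m x) c μ₀ hsep hreg
  exact (Cardinal.mk_le_of_injective hinj).not_gt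
    (mk_nat_arrow_arrow_bool_lt Cardinal.aleph0_lt_mk (hseg μ₀) hpow)
end

section
/- Suppose κ is an almost ineffable cardinal (i.e., every regressive function f : [κ]² → κ, meaning f(α,β) < α for 0 < α < β, has a monochromatic set of cardinality κ) and c : [2^κ]² → κ is almost Δ-regressive. Then there is a c-monochromatic subset of 2^κ of size κ. -/
open Cardinal Set

theorem Cardinal.mk_sdiff_eq_of_mk_lt {α : Type*} {S T : Set α} (hS : ℵ₀ ≤ #S)
    (hT : #T < #S) : #(S \ T : Set α) = #S := by
  refine le_antisymm (mk_le_mk_of_subset sdiff_subset) (not_lt.1 fun h => ?_)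
  exact (le_mk_sdiff_add_mk S T).not_gt (add_lt_of_lt hS h hT)

section

variable {κ : Type*} [LinearOrder κ]

def ltIndicator (a : κ) : κ → Bool := fun i => decide (i < a)

theorem isDelta_ltIndicator {a b : κ} (hab : a < b) :
    IsDelta (ltIndicator a) (ltIndicator b) a :=
  ⟨by simp [ltIndicator, hab], fun j hj => by simp [ltIndicator, hj, hj.trans hab]⟩

theorem ltIndicator_injective : Function.Injective (ltIndicator (κ := κ)) := by
  intro a b h
  by_contra hne
  rcases lt_or_gt_of_ne hne with hab | hba
  · exact (isDelta_ltIndicator hab).1 (congrFun h a)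
  · exact (isDelta_ltIndicator hba).1 (congrFun h b).symm

variable (c : (κ → Bool) → (κ → Bool) → κ) (μ₀ : κ)

theorem c_ltIndicator_lt (hreg : ∀ x y i, x ≠ y → IsDelta x y i → c x y < i ∨ c x y < μ₀)
    {a b : κ} (ha : μ₀ ≤ a) (hab : a < b) : c (ltIndicator a) (ltIndicator b) < a := by
  rcases hreg _ _ a (ltIndicator_injective.ne hab.ne) (isDelta_ltIndicator hab) with h | h
  · exact h
  · exact h.trans_le ha

def indicatorColoring [OrderBot κ] (a b : κ) : κ :=
  if μ₀ ≤ a then c (ltIndicator a) (ltIndicator b) else ⊥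

theorem indicatorColoring_lt [OrderBot κ]
    (hreg : ∀ x y i, x ≠ y → IsDelta x y i → c x y < i ∨ c x y < μ₀)
    {a b : κ} (hab : a < b) (ha : ¬IsMin a) : indicatorColoring c μ₀ a b < a := by
  unfold indicatorColoring
  split_ifs with hμ
  · exact c_ltIndicator_lt c μ₀ hreg hμ hab
  · exact not_isMin_iff_bot_lt.1 ha

end

/-- Suppose `κ` is an almost ineffable cardinal (an uncountable well-ordered type which
is an initial ordinal such that every regressive `f : [κ]² → κ` has a monochromatic set
of cardinality `κ`), and `c : [2^κ]² → κ` is almost `Δ`-regressive (for some `μ₀ < κ`,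
`c(x,y) < max {Δ(x,y), μ₀}` for all distinct `x, y`). Then there is a `c`-monochromatic
subset of `2^κ` of size `κ`. -/
theorem stmt7 {κ : Type u} [LinearOrder κ] [WellFoundedLT κ] [Uncountable κ]
    (hseg : ∀ a : κ, Cardinal.mk (Set.Iio a) < Cardinal.mk κ)
    (hineff : ∀ f : κ → κ → κ, (∀ a b : κ, a < b → ¬ IsMin a → f a b < a) →
      ∃ A : Set κ, Cardinal.mk A = Cardinal.mk κ ∧
        ∃ m : κ, ∀ a ∈ A, ∀ b ∈ A, a < b → f a b = m)
    (c : (κ → Bool) → (κ → Bool) → κ) (hsymm : ∀ x y, c x y = c y x)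
    (μ₀ : κ)
    (hreg : ∀ x y i, x ≠ y → IsDelta x y i → c x y < i ∨ c x y < μ₀) :
    ∃ Y : Set (κ → Bool), Cardinal.mk Y = Cardinal.mk κ ∧
      ∃ m : κ, ∀ x ∈ Y, ∀ y ∈ Y, x ≠ y → c x y = m := by
  let := WellFoundedLT.toOrderBot κ
  obtain ⟨A, hA, m, hm⟩ := hineff _ fun _ _ => indicatorColoring_lt c μ₀ hreg
  refine ⟨ltIndicator '' (A \ Iio μ₀), ?_, m, ?_⟩
  · rw [mk_image_eq ltIndicator_injective, ← hA]
    exact mk_sdiff_eq_of_mk_lt (hA ▸ aleph0_le_mk κ) (hA ▸ hseg μ₀)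
  · rintro _ ⟨a, ha, rfl⟩ _ ⟨b, hb, rfl⟩ hne
    wlog hab : a < b generalizing a b
    · rw [hsymm]
      exact this b hb a ha hne.symm ((not_lt.1 hab).lt_of_ne fun h => hne (h ▸ rfl))
    simpa [indicatorColoring, not_lt.1 ha.2] using hm a ha.1 b hb.1 hab
end

section
/- Let κ be an uncountable regular cardinal and let c : [2^κ]² → κ be almost Δ-regressive and κ-Borel (with 2^κ carrying the <κ-supported product topology and κ the discrete topology). Then there is a c-monochromatic subset of 2^κ of size κ. -/
/-- The `<κ`-supported product topology on `2^κ`, generated by the basic open sets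
`N_s = {x | s ⊆ x}` for `s ∈ 2^{<κ}` (i.e. by sets determined by an initial segment). -/
def kTop (κ : Type*) [LinearOrder κ] : TopologicalSpace (κ → Bool) :=
  TopologicalSpace.generateFrom
    {U | ∃ (a : κ) (y : κ → Bool), U = {x | ∀ i, i < a → x i = y i}}

/-- The `κ`-Borel subsets of `2^κ × 2^κ` (with the product of the `<κ`-supported
topologies): the smallest family containing the open sets and closed under
complements and unions of size `κ`. -/
inductive KBorel2 (κ : Type*) [LinearOrder κ] : Set ((κ → Bool) × (κ → Bool)) → Prop
  | of_open (U : Set ((κ → Bool) × (κ → Bool))) :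
      @IsOpen _ (@instTopologicalSpaceProd _ _ (kTop κ) (kTop κ)) U → KBorel2 κ U
  | compl (s : Set ((κ → Bool) × (κ → Bool))) : KBorel2 κ s → KBorel2 κ sᶜ
  | iUnion (f : κ → Set ((κ → Bool) × (κ → Bool))) :
      (∀ i, KBorel2 κ (f i)) → KBorel2 κ (⋃ i, f i)

/-!
Build, by transfinite recursion along `κ`, points `x_i` and colours `m_i` together with a
decreasing chain of cones such that `c x_i y = m_i` for comeagre many `y` in the `i`-th cone.
The `κ`-Baire category theorem lets `x_i` be chosen in the limit of the earlier cones and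
generic for the earlier comeagre sets, so that `c x_j x_i = m_j` for all `j < i`. Flipping
`x_i` at the length `L` of the limit cone gives a cone of points `y` with `Δ(x_i, y) = L`, on
which `c x_i` takes fewer than `κ` values; since each colour class has the Baire property, one
of them is comeagre in a subcone, and this fixes `m_i`. Then `m_i < μ₀` or `m_i` lies below
some earlier length, and a closure argument along an `ω`-sequence shows that some colour
`m` is taken by `κ` many `m_i`; the corresponding `x_i` form a monochromatic set.
-/

open Cardinal Set
open scoped symmDiff Topology

universe u

namespace KappaBaire

variable {κ : Type u} [LinearOrder κ]

/-- The basic open set `N_s` for `s = z ↾ a`. -/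
def cone (a : κ) (z : κ → Bool) : Set (κ → Bool) := {x | ∀ i < a, x i = z i}

lemma mem_cone_self (a : κ) (z : κ → Bool) : z ∈ cone a z := fun _ _ => rfl

lemma cone_subset_of_le {a b : κ} (hab : a ≤ b) (z : κ → Bool) : cone b z ⊆ cone a z :=
  fun _ hx i hi => hx i (hi.trans_le hab)

lemma cone_eq_of_mem {a : κ} {z x : κ → Bool} (hx : x ∈ cone a z) : cone a x = cone a z := by
  ext y
  exact ⟨fun hy i hi => (hy i hi).trans (hx i hi), fun hy i hi => (hy i hi).trans (hx i hi).symm⟩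

lemma cone_subset_of_mem {a b : κ} {z w : κ → Bool} (hab : a ≤ b) (hw : w ∈ cone a z) :
    cone b w ⊆ cone a z :=
  cone_eq_of_mem hw ▸ cone_subset_of_le hab w

structure Condition (κ : Type u) where
  len : κ
  stem : κ → Bool

namespace Condition

def cone (p : Condition κ) : Set (κ → Bool) := KappaBaire.cone p.len p.stem

def Extends (q p : Condition κ) : Prop := p.len < q.len ∧ q.stem ∈ p.cone

end Condition

lemma bddAbove_of_mk_lt (hseg : ∀ a : κ, #(Iio a) < #κ) (hκ : (#κ).IsRegular) {S : Set κ}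
    (hS : #S < #κ) : BddAbove S := by
  by_contra h
  have hcover : (univ : Set κ) ⊆ ⋃ s : S, Iio (s : κ) := fun x _ => by
    obtain ⟨s, hs, hxs⟩ := not_bddAbove_iff.mp h x
    exact mem_iUnion.mpr ⟨⟨s, hs⟩, hxs⟩
  have hle := (mk_univ.symm.trans_le (mk_le_mk_of_subset hcover)).trans mk_iUnion_le_sum_mk
  exact hle.not_gt (sum_lt_of_isRegular hκ hS fun s => hseg s)

lemma mk_eq_of_not_bddAbove (hseg : ∀ a : κ, #(Iio a) < #κ) (hκ : (#κ).IsRegular)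
    {S : Set κ} (hS : ¬BddAbove S) : #S = #κ :=
  (mk_set_le S).eq_of_not_lt fun h => hS (bddAbove_of_mk_lt hseg hκ h)

lemma noMaxOrder_of_mk_Iio_lt (hseg : ∀ a : κ, #(Iio a) < #κ) (hκ : ℵ₀ ≤ #κ) :
    NoMaxOrder κ := by
  refine ⟨fun a => ?_⟩
  by_contra! h
  have hle := (mk_univ.symm.trans_le (mk_le_mk_of_subset fun x _ => by
    rw [Iio_insert]; exact h x)).trans (mk_insert_le (s := Iio a) (a := a))
  exact hle.not_gt (add_lt_of_lt hκ (hseg a) (one_lt_aleph0.trans_le hκ))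

lemma exists_isLUB [WellFoundedLT κ] {S : Set κ} (hS : BddAbove S) : ∃ L, IsLUB S L :=
  ⟨wellFounded_lt.min _ hS, wellFounded_lt.min_mem _ hS, fun _ hb => wellFounded_lt.min_le hb⟩

lemma exists_union_of_chain [WellFoundedLT κ] (hseg : ∀ a : κ, #(Iio a) < #κ)
    (hκ : (#κ).IsRegular) (i : κ) (p : κ → Condition κ)
    (hp : ∀ k < i, ∀ j < k, (p k).Extends (p j)) :
    ∃ L W, IsLUB ((fun j => (p j).len) '' Iio i) L ∧ ∀ j < i, W ∈ (p j).cone := by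
  classical
  obtain ⟨L, hL⟩ := exists_isLUB (bddAbove_of_mk_lt hseg hκ (mk_image_le.trans_lt (hseg i)))
  refine ⟨L, fun t => if h : ∃ j < i, t < (p j).len then (p h.choose).stem t else false, hL,
    fun j hj t ht => ?_⟩
  have h : ∃ j < i, t < (p j).len := ⟨j, hj, ht⟩
  simp only [dif_pos h]
  obtain ⟨hk, htk⟩ := h.choose_spec
  rcases lt_trichotomy h.choose j with hlt | heq | hgt
  · exact ((hp j hj _ hlt).2 t htk).symm
  · rw [heq]
  · exact (hp _ hk j hgt).2 t ht

lemma diag_mem_cone (p : κ → Condition κ) (hlen : ∀ i, i < (p i).len)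
    (hp : ∀ k, ∀ j < k, (p k).Extends (p j)) (i : κ) : (fun t => (p t).stem t) ∈ (p i).cone := by
  intro t ht
  rcases lt_trichotomy t i with h | rfl | h
  · exact ((hp i t h).2 t (hlen t)).symm
  · rfl
  · exact (hp t i h).2 t ht

lemma exists_seq_of_exists_next [WellFoundedLT κ] {α : Type*} [Nonempty α]
    (P : (κ → α) → κ → α → Prop)
    (hP : ∀ g g' i s, (∀ j < i, g j = g' j) → P g i s → P g' i s)
    (hnext : ∀ g i, (∀ j < i, P g j (g j)) → ∃ s, P g i s) :
    ∃ g : κ → α, ∀ i, P g i (g i) := by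
  classical
  let extend (i : κ) (h : ∀ j < i, α) : κ → α :=
    fun j => if hj : j < i then h j hj else Classical.arbitrary α
  let g : κ → α := wellFounded_lt.fix fun i h =>
    if hs : ∃ s, P (extend i h) i s then hs.choose else Classical.arbitrary α
  have hg : ∀ i, g i = if hs : ∃ s, P (extend i fun j _ => g j) i s
      then hs.choose else Classical.arbitrary α :=
    fun i => wellFounded_lt.fix_eq _ i
  have hextend : ∀ i, ∀ j < i, extend i (fun j _ => g j) j = g j := fun i j hj => dif_pos hj
  refine ⟨g, fun i => ?_⟩
  induction i using WellFoundedLT.induction with | _ i IH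
  have hs : ∃ s, P (extend i fun j _ => g j) i s := by
    obtain ⟨s, hs⟩ := hnext g i IH
    exact ⟨s, hP _ _ i s (fun j hj => (hextend i j hj).symm) hs⟩
  rw [hg i, dif_pos hs]
  exact hP _ _ i _ (hextend i) hs.choose_spec

lemma exists_not_bddAbove_fiber [WellFoundedLT κ] [Uncountable κ]
    (hseg : ∀ a : κ, #(Iio a) < #κ) (hκ : (#κ).IsRegular) {f ℓ : κ → κ} (hℓ : Monotone ℓ)
    (μ : κ) (hf : ∀ α, f α < μ ∨ ∃ j < α, f α < ℓ j) : ∃ m, ¬BddAbove (f ⁻¹' {m}) := by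
  have := noMaxOrder_of_mk_Iio_lt hseg hκ.aleph0_le
  by_contra! hbdd
  choose bnd hbnd using hbdd
  have hnext : ∀ b, ∃ b', b < b' ∧ ℓ b < b' ∧ ∀ m < b, bnd m < b' := by
    intro b
    obtain ⟨u, hu⟩ := bddAbove_of_mk_lt hseg hκ (mk_image_le.trans_lt (hseg b) :
      #(bnd '' Iio b) < #κ)
    obtain ⟨b', hb'⟩ := exists_gt (max (max b (ℓ b)) u)
    refine ⟨b', ((le_max_left _ _).trans (le_max_left _ _)).trans_lt hb',
      ((le_max_right _ _).trans (le_max_left _ _)).trans_lt hb',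
      fun m hm => ((hu ⟨m, hm, rfl⟩).trans (le_max_right _ _)).trans_lt hb'⟩
  choose next hnext using hnext
  obtain ⟨β₀, hβ₀⟩ := exists_gt μ
  set β : ℕ → κ := fun n => next^[n] β₀
  have : Countable (range β) := (countable_range β).to_subtype
  obtain ⟨s, hs⟩ := exists_isLUB
    (bddAbove_of_mk_lt hseg hκ ((mk_le_aleph0 (α := range β)).trans_lt aleph0_lt_mk))
  have hnext_le : ∀ n, next (β n) ≤ s := fun n => by
    rw [← Function.iterate_succ_apply' next n β₀]
    exact hs.1 ⟨n + 1, rfl⟩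
  have hlt : ∀ j < s, ∃ n, j < β n := fun j hj => by
    obtain ⟨_, ⟨n, rfl⟩, h⟩ := (lt_isLUB_iff hs).mp hj
    exact ⟨n, h⟩
  -- `s` is closed under `ℓ` and `bnd`: so `f s < s`, but then `bnd (f s) < s`.
  have hfs : f s < s := by
    rcases hf s with h | ⟨j, hj, h⟩
    · exact (h.trans hβ₀).trans ((hnext β₀).1.trans_le (hnext_le 0))
    · obtain ⟨n, hn⟩ := hlt j hj
      exact h.trans_le ((hℓ hn.le).trans ((hnext (β n)).2.1.le.trans (hnext_le n)))
  obtain ⟨n, hn⟩ := hlt _ hfs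
  exact lt_irrefl s (((hbnd (f s) rfl).trans_lt ((hnext (β n)).2.2 _ hn)).trans_le (hnext_le n))

section Category

def DenseIn (U S : Set (κ → Bool)) : Prop :=
  ∀ b w, cone b w ⊆ U → ∃ c v, cone c v ⊆ cone b w ∧ cone c v ⊆ S

def IsComeagreIn (U C : Set (κ → Bool)) : Prop :=
  ∃ D : κ → Set (κ → Bool), (∀ i, DenseIn U (D i)) ∧ U ∩ ⋂ i, D i ⊆ C

/-- A dense set here contains a subcone of every cone, so its complement is nowhere dense;
being disjoint from the intersection of `κ` dense sets is thus being a union of `κ` nowhere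
dense sets. -/
def IsMeagre (S : Set (κ → Bool)) : Prop := IsComeagreIn univ Sᶜ

def IsConeOpen (U : Set (κ → Bool)) : Prop := ∀ x ∈ U, ∃ a, cone a x ⊆ U

def HasBaireProperty (S : Set (κ → Bool)) : Prop := ∃ U, IsConeOpen U ∧ IsMeagre (S ∆ U)

variable {U V S C C' : Set (κ → Bool)}

lemma DenseIn.anti (h : DenseIn U S) (hVU : V ⊆ U) : DenseIn V S :=
  fun b w hbw => h b w (hbw.trans hVU)

lemma DenseIn.inter {A B : Set (κ → Bool)} (hA : DenseIn U A) (hB : DenseIn U B) :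
    DenseIn U (A ∩ B) := by
  intro b w hbw
  obtain ⟨c, v, hcv, hvA⟩ := hA b w hbw
  obtain ⟨c', v', hcv', hvB⟩ := hB c v (hcv.trans hbw)
  exact ⟨c', v', hcv'.trans hcv, subset_inter (hcv'.trans hvA) hvB⟩

lemma DenseIn.isComeagreIn [Nonempty κ] (h : DenseIn U S) : IsComeagreIn U S :=
  ⟨fun _ => S, fun _ => h, by rw [iInter_const]; exact inter_subset_right⟩

lemma isComeagreIn_univ : IsComeagreIn U univ :=
  ⟨fun _ => univ, fun _ b w _ => ⟨b, w, subset_rfl, subset_univ _⟩, subset_univ _⟩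

lemma IsComeagreIn.anti (h : IsComeagreIn U C) (hVU : V ⊆ U) : IsComeagreIn V C := by
  obtain ⟨D, hD, hDC⟩ := h
  exact ⟨D, fun i => (hD i).anti hVU, (inter_subset_inter_left _ hVU).trans hDC⟩

lemma IsComeagreIn.mono (h : IsComeagreIn U C) (hC : U ∩ C ⊆ C') : IsComeagreIn U C' := by
  obtain ⟨D, hD, hDC⟩ := h
  exact ⟨D, hD, fun x hx => hC ⟨hx.1, hDC hx⟩⟩

lemma IsComeagreIn.inter (hC : IsComeagreIn U C) (hC' : IsComeagreIn U C') :
    IsComeagreIn U (C ∩ C') := by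
  obtain ⟨D, hD, hDC⟩ := hC
  obtain ⟨D', hD', hDC'⟩ := hC'
  refine ⟨fun i => D i ∩ D' i, fun i => (hD i).inter (hD' i), ?_⟩
  rw [iInter_inter_distrib]
  exact fun x ⟨hxU, hxD, hxD'⟩ => ⟨hDC ⟨hxU, hxD⟩, hDC' ⟨hxU, hxD'⟩⟩

lemma IsComeagreIn.iInter [Infinite κ] {ι : Type u} (hι : #ι ≤ #κ)
    {C : ι → Set (κ → Bool)} (hC : ∀ i, IsComeagreIn U (C i)) : IsComeagreIn U (⋂ i, C i) := by
  rcases isEmpty_or_nonempty ι with hι' | hι'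
  · simpa using isComeagreIn_univ
  choose D hD hDC using hC
  have hprod : #(ι × κ) ≤ #κ := by
    simpa [mul_eq_self (aleph0_le_mk κ)] using mul_le_mul_left hι #κ
  obtain ⟨e⟩ := (le_def _ _).mp hprod
  have hf := Function.invFun_surjective e.injective
  refine ⟨fun k => D (Function.invFun e k).1 (Function.invFun e k).2, fun k => hD _ _, ?_⟩
  rw [hf.iInter_comp fun p => D p.1 p.2]
  exact fun x hx => mem_iInter.mpr fun i =>
    hDC i ⟨hx.1, mem_iInter.mpr fun k => mem_iInter.mp hx.2 (i, k)⟩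

lemma IsMeagre.mono {T : Set (κ → Bool)} (h : IsMeagre T) (hST : S ⊆ T) : IsMeagre S :=
  IsComeagreIn.mono h fun _ hx hxS => hx.2 (hST hxS)

lemma IsMeagre.union {T : Set (κ → Bool)} (hS : IsMeagre S) (hT : IsMeagre T) :
    IsMeagre (S ∪ T) := by
  rw [IsMeagre, compl_union]
  exact hS.inter hT

lemma IsMeagre.iUnion [Infinite κ] {ι : Type u} (hι : #ι ≤ #κ) {S : ι → Set (κ → Bool)}
    (h : ∀ i, IsMeagre (S i)) : IsMeagre (⋃ i, S i) := by
  rw [IsMeagre, compl_iUnion]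
  exact IsComeagreIn.iInter hι h

lemma IsMeagre.isComeagreIn (h : IsMeagre (S ∆ U)) (hVU : V ⊆ U) : IsComeagreIn V S :=
  (h.anti (subset_univ V)).mono fun _ ⟨hxV, hx⟩ =>
    by_contra fun hxS => hx (mem_symmDiff.mpr (Or.inr ⟨hVU hxV, hxS⟩))

lemma exists_extends_subset_of_denseIn [WellFoundedLT κ] (hseg : ∀ a : κ, #(Iio a) < #κ)
    (hκ : (#κ).IsRegular) {a : κ} {z : κ → Bool} (hS : DenseIn (cone a z) S) (i : κ)
    (p : κ → Condition κ) (hp : ∀ j < i, (p j).cone ⊆ cone a z ∧ ∀ k < j, (p j).Extends (p k)) :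
    ∃ q : Condition κ, i < q.len ∧ q.cone ⊆ cone a z ∩ S ∧ ∀ j < i, q.Extends (p j) := by
  have := noMaxOrder_of_mk_Iio_lt hseg hκ.aleph0_le
  obtain ⟨L, W, hL, hW⟩ := exists_union_of_chain hseg hκ i p fun k hk => (hp k hk).2
  obtain ⟨b, w, hbw, hb, hw⟩ : ∃ b w, cone b w ⊆ cone a z ∧
      (∀ j < i, (p j).len ≤ b) ∧ ∀ j < i, w ∈ (p j).cone := by
    by_cases hi : ∃ j, j < i
    · obtain ⟨j, hj⟩ := hi
      exact ⟨L, W, (cone_subset_of_mem (hL.1 ⟨j, hj, rfl⟩) (hW j hj)).trans (hp j hj).1,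
        fun j hj => hL.1 ⟨j, hj, rfl⟩, hW⟩
    · exact ⟨a, z, subset_rfl, fun j hj => (hi ⟨j, hj⟩).elim, fun j hj => (hi ⟨j, hj⟩).elim⟩
  obtain ⟨c, v, hcv, hvS⟩ := hS b w hbw
  obtain ⟨e, he⟩ := exists_gt (max (max c b) i)
  have hev : cone e v ⊆ cone c v := cone_subset_of_le ((le_max_left _ _).trans (le_max_left _ _)
    |>.trans he.le) v
  refine ⟨⟨e, v⟩, (le_max_right _ _).trans_lt he, fun y hy => ⟨hbw (hcv (hev hy)), hvS (hev hy)⟩,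
    fun j hj => ⟨?_, cone_subset_of_mem (hb j hj) (hw j hj) (hcv (mem_cone_self c v))⟩⟩
  exact ((hb j hj).trans ((le_max_right _ _).trans (le_max_left _ _))).trans_lt he

/-- The `κ`-Baire category theorem. -/
theorem IsComeagreIn.nonempty [WellFoundedLT κ] (hseg : ∀ a : κ, #(Iio a) < #κ)
    (hκ : (#κ).IsRegular) {a : κ} {z : κ → Bool} (h : IsComeagreIn (cone a z) C) :
    (cone a z ∩ C).Nonempty := by
  obtain ⟨D, hD, hDC⟩ := h
  have : Nonempty (Condition κ) := ⟨⟨a, z⟩⟩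
  obtain ⟨p, hp⟩ := exists_seq_of_exists_next
    (fun p i q => i < q.len ∧ q.cone ⊆ cone a z ∩ D i ∧ ∀ j < i, q.Extends (p j))
    (fun p p' i q hpp' ⟨hi, hq, hpq⟩ => ⟨hi, hq, fun j hj => hpp' j hj ▸ hpq j hj⟩)
    (fun p i hp => exists_extends_subset_of_denseIn hseg hκ (hD i) i p
      fun j hj => ⟨fun _ hx => ((hp j hj).2.1 hx).1, (hp j hj).2.2⟩)
  have hx i := (hp i).2.1 (diag_mem_cone p (fun i => (hp i).1) (fun k => (hp k).2.2) i)
  exact ⟨_, (hx a).1, hDC ⟨(hx a).1, mem_iInter.mpr fun i => (hx i).2⟩⟩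

lemma not_isMeagre_cone [WellFoundedLT κ] (hseg : ∀ a : κ, #(Iio a) < #κ)
    (hκ : (#κ).IsRegular) (a : κ) (z : κ → Bool) : ¬IsMeagre (cone a z) := fun h =>
  let ⟨_, hx, hx'⟩ := (IsComeagreIn.anti h (subset_univ _)).nonempty hseg hκ
  hx' hx

lemma IsConeOpen.hasBaireProperty (hU : IsConeOpen U) : HasBaireProperty U :=
  ⟨U, hU, by rw [symmDiff_self, IsMeagre, bot_eq_empty, compl_empty]; exact isComeagreIn_univ⟩

lemma IsConeOpen.denseIn_union_interior_compl (hU : IsConeOpen U) :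
    DenseIn univ (U ∪ {x | ∃ a, cone a x ⊆ Uᶜ}) := by
  intro b w _
  by_cases h : ∃ x ∈ cone b w, x ∈ U
  · obtain ⟨x, hxb, hxU⟩ := h
    obtain ⟨a, ha⟩ := hU x hxU
    exact ⟨max b a, x, cone_subset_of_mem (le_max_left b a) hxb,
      fun y hy => Or.inl (ha (cone_subset_of_le (le_max_right b a) x hy))⟩
  · push Not at h
    exact ⟨b, w, subset_rfl, fun y hy => Or.inr ⟨b, cone_eq_of_mem hy ▸ h⟩⟩

lemma HasBaireProperty.compl [Nonempty κ] (h : HasBaireProperty S) : HasBaireProperty Sᶜ := by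
  obtain ⟨U, hU, hSU⟩ := h
  set V := {x | ∃ a, cone a x ⊆ Uᶜ}
  have hUV : ∀ x ∈ V, x ∉ U := fun x ⟨a, ha⟩ => ha (mem_cone_self a x)
  have hrest : IsMeagre (U ∪ V)ᶜ := by
    rw [IsMeagre, compl_compl]
    exact hU.denseIn_union_interior_compl.isComeagreIn
  refine ⟨V, fun x ⟨a, ha⟩ => ⟨a, fun y hy => ⟨a, cone_eq_of_mem hy ▸ ha⟩⟩,
    (hSU.union hrest).mono fun x hx => ?_⟩
  have := hUV x
  simp only [mem_symmDiff, mem_union, mem_compl_iff] at hx ⊢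
  tauto

lemma HasBaireProperty.iUnion [Infinite κ] {S : κ → Set (κ → Bool)}
    (h : ∀ i, HasBaireProperty (S i)) : HasBaireProperty (⋃ i, S i) := by
  choose U hU hSU using h
  refine ⟨⋃ i, U i, fun x hx => ?_, (IsMeagre.iUnion le_rfl hSU).mono
    iUnion_symmDiff_iUnion_subset⟩
  obtain ⟨i, hi⟩ := mem_iUnion.mp hx
  obtain ⟨a, ha⟩ := hU i x hi
  exact ⟨a, ha.trans (subset_iUnion U i)⟩

lemma isConeOpen_of_isOpen [Nonempty κ] {U : Set (κ → Bool)} (hU : IsOpen[kTop κ] U) :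
    IsConeOpen U := by
  induction hU with
  | basic V hV =>
    obtain ⟨a, y, rfl⟩ := hV
    exact fun x hx => ⟨a, fun x' hx' i hi => (hx' i hi).trans (hx i hi)⟩
  | univ => exact fun _ _ => ⟨Classical.arbitrary κ, subset_univ _⟩
  | inter V W _ _ hV hW =>
    rintro x ⟨hxV, hxW⟩
    obtain ⟨a, ha⟩ := hV x hxV
    obtain ⟨b, hb⟩ := hW x hxW
    exact ⟨max a b, fun y hy => ⟨ha (cone_subset_of_le (le_max_left a b) x hy),
      hb (cone_subset_of_le (le_max_right a b) x hy)⟩⟩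
  | sUnion T _ hT =>
    rintro x ⟨t, ht, hxt⟩
    obtain ⟨a, ha⟩ := hT t ht x hxt
    exact ⟨a, ha.trans (subset_sUnion_of_mem ht)⟩

lemma isConeOpen_section [Nonempty κ] {U : Set ((κ → Bool) × (κ → Bool))}
    (hU : IsOpen[@instTopologicalSpaceProd _ _ (kTop κ) (kTop κ)] U) (x : κ → Bool) :
    IsConeOpen {y | (x, y) ∈ U} := by
  let : TopologicalSpace (κ → Bool) := kTop κ
  intro y hy
  obtain ⟨u, v, -, hv, hxu, hyv, huv⟩ := isOpen_prod_iff.mp hU x y hy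
  obtain ⟨a, ha⟩ := isConeOpen_of_isOpen hv y hyv
  exact ⟨a, fun y' hy' => huv ⟨hxu, ha hy'⟩⟩

lemma _root_.KBorel2.hasBaireProperty_section [Infinite κ] {S : Set ((κ → Bool) × (κ → Bool))}
    (hS : KBorel2 κ S) (x : κ → Bool) : HasBaireProperty {y | (x, y) ∈ S} := by
  induction hS with
  | of_open U hU => exact (isConeOpen_section hU x).hasBaireProperty
  | compl s _ hs => exact hs.compl
  | iUnion f _ hf =>
    rw [show {y | (x, y) ∈ ⋃ i, f i} = ⋃ i, {y | (x, y) ∈ f i} by ext; simp]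
    exact HasBaireProperty.iUnion hf

lemma exists_isComeagreIn_of_cone_subset_iUnion [WellFoundedLT κ]
    (hseg : ∀ a : κ, #(Iio a) < #κ) (hκ : (#κ).IsRegular) {ι : Type u} (hι : #ι ≤ #κ)
    {T : ι → Set (κ → Bool)} (hT : ∀ m, HasBaireProperty (T m)) {b : κ} {w : κ → Bool}
    (hcov : cone b w ⊆ ⋃ m, T m) :
    ∃ m c v, cone c v ⊆ cone b w ∧ IsComeagreIn (cone c v) (T m) := by
  have := infinite_iff.mpr hκ.aleph0_le
  choose U hU hTU using hT
  by_cases h : ∃ m, ∃ x ∈ cone b w, x ∈ U m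
  · obtain ⟨m, x, hxb, hxU⟩ := h
    obtain ⟨a, ha⟩ := hU m x hxU
    exact ⟨m, max b a, x, cone_subset_of_mem (le_max_left b a) hxb,
      (hTU m).isComeagreIn ((cone_subset_of_le (le_max_right b a) x).trans ha)⟩
  · push Not at h
    refine absurd ((IsMeagre.iUnion hι hTU).mono fun x hx => ?_) (not_isMeagre_cone hseg hκ b w)
    obtain ⟨m, hm⟩ := mem_iUnion.mp (hcov hx)
    exact mem_iUnion.mpr ⟨m, mem_symmDiff.mpr (Or.inl ⟨hm, h m x hx⟩)⟩

end Category

section Construction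

lemma isDelta_of_mem_cone_update {x y : κ → Bool} {L b : κ} (hLb : L < b)
    (hy : y ∈ cone b (Function.update x L (!x L))) : IsDelta x y L := by
  refine ⟨?_, fun j hj => ?_⟩
  · rw [hy L hLb, Function.update_self]
    cases x L <;> decide
  · rw [hy j (hj.trans hLb), Function.update_of_ne hj.ne]

variable (c : (κ → Bool) → (κ → Bool) → κ) (μ₀ : κ)

lemma exists_isComeagreIn_color [WellFoundedLT κ] (hseg : ∀ a : κ, #(Iio a) < #κ)
    (hκ : (#κ).IsRegular) (hc : ∀ x y i, x ≠ y → IsDelta x y i → c x y < i ∨ c x y < μ₀)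
    (hcB : ∀ m, KBorel2 κ {p | c p.1 p.2 = m}) (x : κ → Bool) (L : κ) :
    ∃ m, (m < L ∨ m < μ₀) ∧ ∃ q : Condition κ, L < q.len ∧ q.cone ⊆ cone L x ∧ x ∉ q.cone ∧
      IsComeagreIn q.cone {y | c x y = m} := by
  have := noMaxOrder_of_mk_Iio_lt hseg hκ.aleph0_le
  have := infinite_iff.mpr hκ.aleph0_le
  obtain ⟨b, hLb⟩ := exists_gt L
  set w := Function.update x L (!x L)
  have hcov : cone b w ⊆ ⋃ m : Iio (max L μ₀), {y | c x y = m} := fun y hy => by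
    have hΔ := isDelta_of_mem_cone_update hLb hy
    have hxy := hc x y L (fun h => hΔ.1 (congrFun h L)) hΔ
    exact mem_iUnion.mpr ⟨⟨c x y, lt_max_iff.mpr hxy⟩, rfl⟩
  obtain ⟨⟨m, hm⟩, a, v, hav, hmv⟩ := exists_isComeagreIn_of_cone_subset_iUnion hseg hκ
    (hseg _).le (fun m => (hcB m).hasBaireProperty_section x) hcov
  have hvw : v ∈ cone b w := hav (mem_cone_self a v)
  have hwx : w ∈ cone L x := fun t ht => Function.update_of_ne ht.ne _ _
  refine ⟨m, lt_max_iff.mp hm, ⟨max a b, v⟩, hLb.trans_le (le_max_right a b), ?_, ?_,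
    hmv.anti (cone_subset_of_le (le_max_left a b) v)⟩
  · exact cone_subset_of_mem (le_max_right a b) hvw |>.trans (cone_subset_of_mem hLb.le hwx)
  · intro hx
    have hxv : x L = v L := hx L (hLb.trans_le (le_max_right a b))
    rw [hvw L hLb] at hxv
    simp [w] at hxv

/-- `pt` and `col` are the point `x_i` and the colour `m_i` of the construction. -/
structure Stage (κ : Type u) extends Condition κ where
  pt : κ → Bool
  col : κ

structure IsStageAt (g : κ → Stage κ) (i : κ) (s : Stage κ) : Prop where
  extends_of_lt : ∀ j < i, s.Extends (g j).toCondition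
  pt_mem : ∀ j < i, s.pt ∈ (g j).cone
  color_eq : ∀ j < i, c (g j).pt s.pt = (g j).col
  pt_not_mem : s.pt ∉ s.cone
  isComeagreIn : IsComeagreIn s.cone {y | c s.pt y = s.col}
  col_lt : s.col < μ₀ ∨ ∃ j < i, s.col < (g j).len

variable {c μ₀}

lemma IsStageAt.congr {g g' : κ → Stage κ} {i : κ} {s : Stage κ} (hgg' : ∀ j < i, g j = g' j)
    (h : IsStageAt c μ₀ g i s) : IsStageAt c μ₀ g' i s where
  extends_of_lt j hj := hgg' j hj ▸ h.extends_of_lt j hj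
  pt_mem j hj := hgg' j hj ▸ h.pt_mem j hj
  color_eq j hj := hgg' j hj ▸ h.color_eq j hj
  pt_not_mem := h.pt_not_mem
  isComeagreIn := h.isComeagreIn
  col_lt := h.col_lt.imp_right fun ⟨j, hj, hlt⟩ => ⟨j, hj, hgg' j hj ▸ hlt⟩

lemma exists_isStageAt [WellFoundedLT κ] (hseg : ∀ a : κ, #(Iio a) < #κ) (hκ : (#κ).IsRegular)
    (hc : ∀ x y i, x ≠ y → IsDelta x y i → c x y < i ∨ c x y < μ₀)
    (hcB : ∀ m, KBorel2 κ {p | c p.1 p.2 = m}) (g : κ → Stage κ) (i : κ)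
    (hg : ∀ j < i, IsStageAt c μ₀ g j (g j)) : ∃ s, IsStageAt c μ₀ g i s := by
  have := infinite_iff.mpr hκ.aleph0_le
  obtain ⟨L, W, hL, hW⟩ := exists_union_of_chain hseg hκ i (fun j => (g j).toCondition)
    fun k hk j hj => (hg k hk).extends_of_lt j hj
  have hLW : ∀ j < i, cone L W ⊆ (g j).cone :=
    fun j hj => cone_subset_of_mem (hL.1 ⟨j, hj, rfl⟩) (hW j hj)
  obtain ⟨x, hxLW, hxcol⟩ : (cone L W ∩ ⋂ j : Iio i, {y | c (g j).pt y = (g j).col}).Nonempty :=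
    IsComeagreIn.nonempty hseg hκ
      (IsComeagreIn.iInter (hseg i).le fun j => (hg j j.2).isComeagreIn.anti (hLW j j.2))
  obtain ⟨m, hm, q, hLq, hqx, hxq, hqm⟩ := exists_isComeagreIn_color c μ₀ hseg hκ hc hcB x L
  refine ⟨⟨q, x, m⟩, fun j hj => ⟨(hL.1 ⟨j, hj, rfl⟩).trans_lt hLq, ?_⟩,
    fun j hj => hLW j hj hxLW, fun j hj => mem_iInter.mp hxcol ⟨j, hj⟩, hxq, hqm,
    hm.symm.imp_right fun hmL => ?_⟩
  · exact hLW j hj (cone_eq_of_mem hxLW ▸ hqx (mem_cone_self q.len q.stem))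
  · obtain ⟨_, ⟨j, hj, rfl⟩, hmj⟩ := (lt_isLUB_iff hL).mp hmL
    exact ⟨j, hj, hmj⟩

lemma exists_forall_isStageAt [WellFoundedLT κ] (hseg : ∀ a : κ, #(Iio a) < #κ)
    (hκ : (#κ).IsRegular) (hc : ∀ x y i, x ≠ y → IsDelta x y i → c x y < i ∨ c x y < μ₀)
    (hcB : ∀ m, KBorel2 κ {p | c p.1 p.2 = m}) :
    ∃ g : κ → Stage κ, ∀ i, IsStageAt c μ₀ g i (g i) := by
  have : Nonempty (Stage κ) := ⟨⟨⟨μ₀, fun _ => false⟩, fun _ => false, μ₀⟩⟩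
  exact exists_seq_of_exists_next _ (fun _ _ _ _ => IsStageAt.congr)
    (exists_isStageAt hseg hκ hc hcB)

lemma injective_pt_of_isStageAt {g : κ → Stage κ} (hg : ∀ i, IsStageAt c μ₀ g i (g i)) :
    Function.Injective fun i => (g i).pt := by
  intro j k (hjk : (g j).pt = (g k).pt)
  by_contra hne
  rcases lt_or_gt_of_ne hne with h | h
  · exact (hg j).pt_not_mem (hjk ▸ (hg k).pt_mem j h)
  · exact (hg k).pt_not_mem (hjk ▸ (hg j).pt_mem k h)

end Construction

end KappaBaire

open KappaBaire

/-- If `κ` is an uncountable regular cardinal (an uncountable well-ordered type which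
is an initial ordinal of regular cardinality) and `c : [2^κ]² → κ` is almost
`Δ`-regressive and `κ`-Borel, then there is a `c`-monochromatic set of size `κ`. -/
theorem stmt9 {κ : Type u} [LinearOrder κ] [WellFoundedLT κ] [Uncountable κ]
    (hseg : ∀ a : κ, Cardinal.mk (Set.Iio a) < Cardinal.mk κ)
    (hreg' : (Cardinal.mk κ).IsRegular)
    (c : (κ → Bool) → (κ → Bool) → κ) (hsymm : ∀ x y, c x y = c y x)
    (μ₀ : κ)
    (hreg : ∀ x y i, x ≠ y → IsDelta x y i → c x y < i ∨ c x y < μ₀)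
    (hBorel : ∀ m : κ, KBorel2 κ {p | c p.1 p.2 = m}) :
    ∃ Y : Set (κ → Bool), Cardinal.mk Y = Cardinal.mk κ ∧
      ∃ m : κ, ∀ x ∈ Y, ∀ y ∈ Y, x ≠ y → c x y = m := by
  obtain ⟨g, hg⟩ := exists_forall_isStageAt hseg hreg' hreg hBorel
  have hlen : Monotone fun i => (g i).len := monotone_iff_forall_lt.mpr fun j k h =>
    ((hg k).extends_of_lt j h).1.le
  obtain ⟨m, hm⟩ := exists_not_bddAbove_fiber hseg hreg' hlen μ₀ fun i => (hg i).col_lt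
  refine ⟨(fun i => (g i).pt) '' ((fun i => (g i).col) ⁻¹' {m}), ?_, m, ?_⟩
  · rw [mk_image_eq_of_injOn _ _ (injective_pt_of_isStageAt hg).injOn,
      mk_eq_of_not_bddAbove hseg hreg' hm]
  · rintro _ ⟨j, hj, rfl⟩ _ ⟨k, hk, rfl⟩ hne
    rcases lt_trichotomy j k with h | rfl | h
    · exact ((hg k).color_eq j h).trans hj
    · exact absurd rfl hne
    · exact (hsymm _ _).trans (((hg j).color_eq k h).trans hk)
end

section
/- For every infinite cardinal κ and every function d : 2^κ → κ, there exist distinct x, y : κ → 2 such that d(x) = d(y) = Δ(x,y). Consequently, Δ_κ is a maximal triangle-free colouring into κ. -/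
section

variable {κ : Type*} [LinearOrder κ]

theorem IsDelta.eq {x y : κ → Bool} {i j : κ} (hi : IsDelta x y i) (hj : IsDelta x y j) :
    i = j := by
  rcases lt_trichotomy i j with h | h | h
  · exact absurd (hj.2 i h) hi.1
  · exact h
  · exact absurd (hi.2 j h) hj.1

variable [WellFoundedLT κ]

open Classical in
noncomputable def diagonal (d : (κ → Bool) → κ) : κ → Bool :=
  wellFounded_lt.fix fun i rec =>
    if h : ∃ z : κ → Bool, d z = i ∧ ∀ j (hj : j < i), z j = rec j hj then !h.choose i else false

open Classical in
theorem diagonal_apply (d : (κ → Bool) → κ) (i : κ) :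
    diagonal d i = if h : ∃ z : κ → Bool, d z = i ∧ ∀ j, j < i → z j = diagonal d j
      then !h.choose i else false :=
  wellFounded_lt.fix_eq _ i

theorem exists_isDelta_diagonal (d : (κ → Bool) → κ) :
    ∃ z, d z = d (diagonal d) ∧ IsDelta z (diagonal d) (d (diagonal d)) := by
  have hex : ∃ z : κ → Bool, d z = d (diagonal d) ∧ ∀ j, j < d (diagonal d) → z j = diagonal d j :=
    ⟨diagonal d, rfl, fun _ _ => rfl⟩
  obtain ⟨hdz, hzx⟩ := hex.choose_spec
  have hx := diagonal_apply d (d (diagonal d))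
  rw [dif_pos hex] at hx
  exact ⟨hex.choose, hdz, by simp [hx], hzx⟩

theorem exists_ne_apply_eq_isDelta (d : (κ → Bool) → κ) :
    ∃ x y : κ → Bool, x ≠ y ∧ d x = d y ∧ IsDelta x y (d x) := by
  obtain ⟨z, hdz, hΔ⟩ := exists_isDelta_diagonal d
  exact ⟨z, diagonal d, fun h => hΔ.1 (congrFun h _), hdz, hdz ▸ hΔ⟩

end

theorem stmt11_general {κ : Type*} [LinearOrder κ] [WellFoundedLT κ] :
    (∀ d : (κ → Bool) → κ, ∃ x y : κ → Bool, x ≠ y ∧ d x = d y ∧ IsDelta x y (d x)) ∧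
    (∀ d : Option (κ → Bool) → Option (κ → Bool) → κ,
      (∀ p q, d p q = d q p) →
      (∀ x y : κ → Bool, x ≠ y → IsDelta x y (d (some x) (some y))) →
      ∃ p q r : Option (κ → Bool),
        p ≠ q ∧ q ≠ r ∧ p ≠ r ∧ d p q = d q r ∧ d p q = d p r) := by
  refine ⟨exists_ne_apply_eq_isDelta, fun d _ hΔ => ?_⟩
  obtain ⟨x, y, hxy, hd, hxyΔ⟩ := exists_ne_apply_eq_isDelta fun x => d none (some x)
  refine ⟨none, some x, some y, by simp, by simpa using hxy, by simp, ?_, hd⟩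
  exact hxyΔ.eq (hΔ x y hxy)

/-- For every infinite cardinal `κ` and every `d : 2^κ → κ` there are distinct `x, y`
with `d x = d y = Δ(x,y)`; consequently `Δ_κ` is a maximal triangle-free colouring into
`κ`: any symmetric colouring of `[2^κ ∪ {new point}]²` (modelled on `Option (2^κ)`)
agreeing with `Δ` on pairs from `2^κ` has a monochromatic triangle. -/
theorem stmt11 {κ : Type*} [LinearOrder κ] [WellFoundedLT κ] [Infinite κ] :
    (∀ d : (κ → Bool) → κ, ∃ x y : κ → Bool, x ≠ y ∧ d x = d y ∧ IsDelta x y (d x)) ∧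
    (∀ d : Option (κ → Bool) → Option (κ → Bool) → κ,
      (∀ p q, d p q = d q p) →
      (∀ x y : κ → Bool, x ≠ y → IsDelta x y (d (some x) (some y))) →
      ∃ p q r : Option (κ → Bool),
        p ≠ q ∧ q ≠ r ∧ p ≠ r ∧ d p q = d q r ∧ d p q = d p r) :=
  stmt11_general
end

section
/- Suppose c : [ω₁]² → ω is a triangle-free colouring such that for every β < ω₁ the map α ↦ c(α, β) (for α < β) is injective. Then c is not a maximal triangle-free colouring; in fact there exists d : ω₁ → ω such that for all α < β < ω₁ it is not the case that d(α) = d(β) = c(α,β). -/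
/-!
Let `a₀ ⋖ a₁` be the two least points of `W` and give both the colour `K ≠ c a₀ a₁`. Above `a₁`,
define `d β` by recursion as `c g β` for some `g < β` with `c g β ≠ d g`; such a `g` exists
because `c a₀ β ≠ c a₁ β` while `d a₀ = d a₁`. If `d a = d b = c a b` with `a₁ < b`, then
`c a b = d b = c g b`, so `a = g` by injectivity of `c (·) b`, contradicting `c g b ≠ d g`.
-/

section Recolouring

variable {W C : Type*} [LinearOrder W] [WellFoundedLT W]

open Classical in
noncomputable def recolouring (c : W → W → C) (a₁ : W) (K : C) : W → C :=
  WellFoundedLT.fix fun β d =>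
    if h : a₁ < β ∧ ∃ α, ∃ hα : α < β, c α β ≠ d α hα then c h.2.choose β else K

variable {c : W → W → C} {a₀ a₁ β : W} {K : C}

open Classical in
theorem recolouring_eq (c : W → W → C) (a₁ : W) (K : C) (β : W) :
    recolouring c a₁ K β =
      if h : a₁ < β ∧ ∃ α, ∃ _ : α < β, c α β ≠ recolouring c a₁ K α then c h.2.choose β
      else K :=
  WellFoundedLT.fix_eq _ β

theorem recolouring_of_le (hβ : β ≤ a₁) : recolouring c a₁ K β = K := by
  rw [recolouring_eq, dif_neg fun h => hβ.not_gt h.1]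

theorem exists_recolouring_eq_of_lt (hinj : ∀ b, Set.InjOn (fun a => c a b) (Set.Iio b))
    (h₀₁ : a₀ < a₁) (hβ : a₁ < β) :
    ∃ g < β, c g β ≠ recolouring c a₁ K g ∧ recolouring c a₁ K β = c g β := by
  have hwitness : ∃ α, ∃ _ : α < β, c α β ≠ recolouring c a₁ K α := by
    by_contra! hall
    have h₀β := h₀₁.trans hβ
    refine h₀₁.ne (hinj β h₀β hβ ?_)
    simp only [hall a₀ h₀β, hall a₁ hβ, recolouring_of_le h₀₁.le, recolouring_of_le le_rfl]
  obtain ⟨hlt, hne⟩ := hwitness.choose_spec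
  refine ⟨_, hlt, hne, ?_⟩
  rw [recolouring_eq, dif_pos ⟨hβ, hwitness⟩]

theorem recolouring_not_monochromatic (hinj : ∀ b, Set.InjOn (fun a => c a b) (Set.Iio b))
    (h₀ : IsBot a₀) (h₀₁ : a₀ ⋖ a₁) (hK : K ≠ c a₀ a₁) {a b : W} (hab : a < b) :
    ¬ (recolouring c a₁ K a = recolouring c a₁ K b ∧ c a b = recolouring c a₁ K a) := by
  rintro ⟨hdd, hcd⟩
  rcases le_or_gt b a₁ with hb | hb
  · have ha : a = a₀ := ((h₀ a).eq_or_lt.resolve_right fun h => h₀₁.2 h (hab.trans_le hb)).symm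
    have hb' : b = a₁ := hb.eq_or_lt.resolve_right (h₀₁.2 (ha ▸ hab))
    subst ha hb'
    exact hK (hcd.trans (recolouring_of_le h₀₁.le)).symm
  · obtain ⟨g, hgb, hne, hdg⟩ := exists_recolouring_eq_of_lt hinj h₀₁.1 hb (K := K)
    have hag : a = g := hinj b hab hgb (hcd.trans (hdd.trans hdg))
    exact hne (hag ▸ hcd)

end Recolouring

theorem exists_isBot_covBy {W : Type*} [LinearOrder W] [WellFoundedLT W] [Nontrivial W] :
    ∃ a₀ a₁ : W, IsBot a₀ ∧ a₀ ⋖ a₁ := by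
  obtain ⟨a₀, -, hmin⟩ := wellFounded_lt.has_min Set.univ (Set.univ_nonempty (α := W))
  have h₀ : IsBot a₀ := fun b => not_lt.1 (hmin b trivial)
  obtain ⟨a₁, h₀₁⟩ := exists_covBy_of_wellFoundedLT h₀.not_isMax
  exact ⟨a₀, a₁, h₀, h₀₁⟩

theorem stmt15_general {W : Type*} [LinearOrder W] [WellFoundedLT W]
    (c : W → W → ℕ)
    (hinj : ∀ b : W, Set.InjOn (fun a => c a b) (Set.Iio b)) :
    ∃ d : W → ℕ, ∀ a b : W, a < b → ¬ (d a = d b ∧ c a b = d a) := by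
  rcases subsingleton_or_nontrivial W with _ | _
  · exact ⟨0, fun a b hab => absurd (Subsingleton.elim a b) hab.ne⟩
  · obtain ⟨a₀, a₁, h₀, h₀₁⟩ := exists_isBot_covBy (W := W)
    exact ⟨recolouring c a₁ (c a₀ a₁ + 1), fun a b hab =>
      recolouring_not_monochromatic hinj h₀ h₀₁ (Nat.succ_ne_self _) hab⟩

/-- Suppose `c : [ω₁]² → ω` (here `W` is a well-ordered uncountable type all of whose
proper initial segments are countable, i.e. a copy of `ω₁`) is a triangle-free colouring
such that each fibre map `α ↦ c α β` (`α < β`) is injective. Then there is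
`d : ω₁ → ω` such that for no `α < β` does `d α = d β = c α β` hold; in particular `c`
is not a maximal triangle-free colouring. -/
theorem stmt15 {W : Type*} [LinearOrder W] [WellFoundedLT W] [Uncountable W]
    (hW : ∀ b : W, (Set.Iio b).Countable)
    (c : W → W → ℕ) (hsymm : ∀ a b, c a b = c b a)
    (htf : ¬ ∃ a b e : W, a < b ∧ b < e ∧ c a b = c b e ∧ c a b = c a e)
    (hinj : ∀ b : W, Set.InjOn (fun a => c a b) (Set.Iio b)) :
    ∃ d : W → ℕ, ∀ a b : W, a < b → ¬ (d a = d b ∧ c a b = d a) :=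
  stmt15_general c hinj
end

section
/- Let c : [ω₁]² → ω be such that for every β < ω₁ the map α ↦ c(α,β) on α < β is finite-to-one. Let ℙ be the poset of pairs (s, f) where s is a finite subset of ω₁, f : s → ω, and for no α < β in s does f(α) = f(β) = c(α,β), ordered by reverse inclusion of f. Then ℙ satisfies the countable chain condition. -/
/-!
By the Δ-system lemma an uncountable family of conditions contains an uncountable subfamily
whose supports form a Δ-system with root `R` and which all take the same values on `R`.
Two members `p`, `q` of it are compatible unless the part of the support of one of them
outside `R` meets the finite set of points that the colouring of the other forbids. Since
those parts are pairwise disjoint, every member is incompatible with only finitely many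
others, and in an uncountable set a relation with finite sections has an unrelated pair.
-/

open Set

section Countability

variable {ι : Type*}

lemma Set.exists_not_countable_fiber {β : Type*} [Countable β] {S : Set ι}
    (hS : ¬ S.Countable) (g : ι → β) : ∃ b, ¬ {i ∈ S | g i = b}.Countable := by
  by_contra! h
  refine hS ((countable_iUnion h).mono fun i hi => ?_)
  exact mem_iUnion.2 ⟨g i, hi, rfl⟩

/-- A countably infinite subset `P` and a point outside `P` and all sections over `P` give
the pair. -/
lemma Set.exists_pair_not_rel_of_finite_sections {S : Set ι} (hS : ¬ S.Countable)
    (r : ι → ι → Prop) (hr : ∀ i ∈ S, {j ∈ S | r i j}.Finite) :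
    ∃ i ∈ S, ∃ j ∈ S, i ≠ j ∧ ¬ r i j ∧ ¬ r j i := by
  obtain ⟨P, hPS, hPc, hPinf⟩ :=
    Infinite.exists_subset_countable_infinite fun h : S.Finite => hS h.countable
  have hN : (P ∪ ⋃ i ∈ P, {j ∈ S | r i j}).Countable :=
    hPc.union (hPc.biUnion fun i hi => (hr i (hPS hi)).countable)
  obtain ⟨j, hjS, hjN⟩ : (S \ (P ∪ ⋃ i ∈ P, {j ∈ S | r i j})).Nonempty :=
    sdiff_nonempty.2 fun h => hS (hN.mono h)
  obtain ⟨i, hiP, hji⟩ := (hPinf.sdiff (hr j hjS)).nonempty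
  refine ⟨i, hPS hiP, j, hjS, ?_, fun hij => hjN ?_, fun hji' => hji ⟨hPS hiP, hji'⟩⟩
  · rintro rfl
    exact hjN (Or.inl hiP)
  · exact Or.inr (mem_biUnion hiP ⟨hjS, hij⟩)

end Countability

section DeltaSystem

variable {ι α : Type*}

/-- Zorn's lemma gives a maximal pairwise disjoint subfamily; every member of `S` meets its
union, so if it were countable, `S` would be countable. -/
lemma exists_not_countable_pairwiseDisjoint (f : ι → Finset α) {S : Set ι}
    (hS : ¬ S.Countable) (hpt : ∀ x, {i ∈ S | x ∈ f i}.Countable) :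
    ∃ T ⊆ S, ¬ T.Countable ∧ T.PairwiseDisjoint f := by
  obtain ⟨T, hT⟩ := zorn_subset {T | T ⊆ S ∧ T.PairwiseDisjoint f} fun C hCS hC =>
    ⟨⋃₀ C, ⟨sUnion_subset fun T hT => (hCS hT).1,
      (hC.pairwiseDisjoint_sUnion f).2 fun T hT => (hCS hT).2⟩, fun _ => subset_sUnion_of_mem⟩
  refine ⟨T, hT.prop.1, fun hTc => hS ?_, hT.prop.2⟩
  have hcover : S ⊆ T ∪ ⋃ x ∈ ⋃ j ∈ T, (f j : Set α), {i ∈ S | x ∈ f i} := by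
    intro i hi
    by_cases hiT : i ∈ T
    · exact Or.inl hiT
    obtain ⟨j, hj, hij⟩ : ∃ j ∈ T, ¬ Disjoint (f i) (f j) := by
      by_contra! h
      exact hiT (hT.mem_of_prop_insert
        ⟨insert_subset hi hT.prop.1, hT.prop.2.insert fun j hj _ => h j hj⟩)
    obtain ⟨x, hxi, hxj⟩ := Finset.not_disjoint_iff.1 hij
    exact Or.inr (mem_biUnion (mem_biUnion hj hxj) ⟨hi, hxi⟩)
  exact ((hTc.biUnion fun j _ => (f j).countable_toSet).biUnion fun x _ => hpt x)
    |> hTc.union |>.mono hcover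

variable [DecidableEq α]

def IsDeltaSystem (f : ι → Finset α) (T : Set ι) (R : Finset α) : Prop :=
  T.Pairwise fun i j => f i ∩ f j = R

lemma IsDeltaSystem.finite_meet_sdiff_root {f : ι → Finset α} {T : Set ι} {R : Finset α}
    (h : IsDeltaSystem f T R) {F : Set α} (hF : F.Finite) :
    {i ∈ T | ∃ x ∈ f i \ R, x ∈ F}.Finite := by
  have hsub : ∀ x, {i ∈ T | x ∈ f i \ R}.Subsingleton := by
    rintro x i ⟨hi, hxi⟩ j ⟨hj, hxj⟩
    by_contra hij
    rw [Finset.mem_sdiff] at hxi hxj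
    exact hxi.2 (h hi hj hij ▸ Finset.mem_inter.2 ⟨hxi.1, hxj.1⟩)
  refine (hF.biUnion fun x _ => (hsub x).finite).subset ?_
  rintro i ⟨hi, x, hx, hxF⟩
  exact mem_biUnion hxF ⟨hi, hx⟩

/-- If some point lies in uncountably many of the sets, remove it and induct; otherwise
there is an uncountable disjoint subfamily. -/
lemma exists_not_countable_isDeltaSystem_of_card_eq (n : ℕ) (f : ι → Finset α) {S : Set ι}
    (hS : ¬ S.Countable) (hcard : ∀ i ∈ S, (f i).card = n) :
    ∃ R, ∃ T ⊆ S, ¬ T.Countable ∧ IsDeltaSystem f T R := by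
  induction n generalizing f S with
  | zero =>
    refine ⟨∅, S, subset_rfl, hS, fun i hi j _ _ => ?_⟩
    simp only [Finset.card_eq_zero.1 (hcard i hi), Finset.empty_inter]
  | succ n ih =>
    by_cases hx : ∃ x, ¬ {i ∈ S | x ∈ f i}.Countable
    · obtain ⟨x, hx⟩ := hx
      obtain ⟨R, T, hTS, hT, hΔ⟩ := ih (fun i => (f i).erase x) hx fun i hi => by
        rw [Finset.card_erase_of_mem hi.2, hcard i hi.1, Nat.add_sub_cancel]
      refine ⟨insert x R, T, fun i hi => (hTS hi).1, hT, fun i hi j hj hij => ?_⟩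
      rw [← hΔ hi hj hij, Finset.insert_inter_distrib, Finset.insert_erase (hTS hi).2,
        Finset.insert_erase (hTS hj).2]
    · push Not at hx
      obtain ⟨T, hTS, hT, hdisj⟩ := exists_not_countable_pairwiseDisjoint f hS hx
      exact ⟨∅, T, hTS, hT, fun i hi j hj hij =>
        Finset.disjoint_iff_inter_eq_empty.1 (hdisj hi hj hij)⟩

lemma exists_not_countable_isDeltaSystem (f : ι → Finset α) {S : Set ι}
    (hS : ¬ S.Countable) : ∃ R, ∃ T ⊆ S, ¬ T.Countable ∧ IsDeltaSystem f T R := by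
  obtain ⟨n, hn⟩ := exists_not_countable_fiber hS fun i => (f i).card
  obtain ⟨R, T, hTS, hT, hΔ⟩ := exists_not_countable_isDeltaSystem_of_card_eq n f hn
    fun i hi => hi.2
  exact ⟨R, T, fun i hi => (hTS hi).1, hT, hΔ⟩

end DeltaSystem

namespace FiniteColoring

variable {W : Type*} [LinearOrder W] (c : W → W → ℕ)

/-- A condition `(s, f)` is a finite support `s` with a total colouring `f`, of which only
the values on `s` matter. -/
def IsCondition (p : Finset W × (W → ℕ)) : Prop :=
  ∀ a ∈ p.1, ∀ b ∈ p.1, a < b → ¬ (p.2 a = p.2 b ∧ c a b = p.2 a)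

def Extends (r p : Finset W × (W → ℕ)) : Prop :=
  p.1 ⊆ r.1 ∧ ∀ a ∈ p.1, r.2 a = p.2 a

def conflictSet (p : Finset W × (W → ℕ)) : Set W :=
  {a | ∃ b ∈ p.1, a < b ∧ c a b = p.2 b}

lemma conflictSet_finite (hfin : ∀ (b : W) (n : ℕ), {a : W | a < b ∧ c a b = n}.Finite)
    (p : Finset W × (W → ℕ)) : (conflictSet c p).Finite := by
  refine (p.1.finite_toSet.biUnion fun b _ => hfin b (p.2 b)).subset ?_
  rintro a ⟨b, hb, hab, hcab⟩
  exact mem_biUnion hb ⟨hab, hcab⟩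

def amalgam (p q : Finset W × (W → ℕ)) : Finset W × (W → ℕ) :=
  (p.1 ∪ q.1, p.1.piecewise p.2 q.2)

lemma extends_amalgam_left (p q : Finset W × (W → ℕ)) : Extends (amalgam p q) p :=
  ⟨Finset.subset_union_left, fun _ ha => Finset.piecewise_eq_of_mem _ _ _ ha⟩

lemma extends_amalgam_right {p q : Finset W × (W → ℕ)}
    (hagree : ∀ a ∈ p.1, a ∈ q.1 → p.2 a = q.2 a) : Extends (amalgam p q) q := by
  refine ⟨Finset.subset_union_right, fun a ha => ?_⟩
  by_cases hap : a ∈ p.1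
  · exact (Finset.piecewise_eq_of_mem _ _ _ hap).trans (hagree a hap ha)
  · exact Finset.piecewise_eq_of_notMem _ _ _ hap

lemma isCondition_amalgam {p q : Finset W × (W → ℕ)} (hp : IsCondition c p)
    (hq : IsCondition c q) (hagree : ∀ a ∈ p.1, a ∈ q.1 → p.2 a = q.2 a)
    (hpq : ∀ a ∈ p.1, a ∉ q.1 → a ∉ conflictSet c q)
    (hqp : ∀ a ∈ q.1, a ∉ p.1 → a ∉ conflictSet c p) : IsCondition c (amalgam p q) := by
  intro a ha b hb hab hbad
  have inside : ∀ s, IsCondition c s → Extends (amalgam p q) s → a ∈ s.1 → b ∈ s.1 → False :=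
    fun s hs hrs has hbs => hs a has b hbs hab (by rwa [← hrs.2 a has, ← hrs.2 b hbs])
  have across : ∀ s, Extends (amalgam p q) s → b ∈ s.1 → a ∈ conflictSet c s :=
    fun s hrs hbs => ⟨b, hbs, hab, by rw [hbad.2, hbad.1, hrs.2 b hbs]⟩
  have hrp := extends_amalgam_left p q
  have hrq := extends_amalgam_right hagree
  rcases Finset.mem_union.1 ha with hap | haq <;> rcases Finset.mem_union.1 hb with hbp | hbq
  · exact inside p hp hrp hap hbp
  · by_cases haq : a ∈ q.1
    · exact inside q hq hrq haq hbq
    by_cases hbp : b ∈ p.1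
    · exact inside p hp hrp hap hbp
    exact hpq a hap haq (across q hrq hbq)
  · by_cases hap : a ∈ p.1
    · exact inside p hp hrp hap hbp
    by_cases hbq : b ∈ q.1
    · exact inside q hq hrq haq hbq
    exact hqp a haq hap (across p hrp hbp)
  · exact inside q hq hrq haq hbq

end FiniteColoring

open FiniteColoring in
theorem stmt16_general {W : Type*} [LinearOrder W]
    (c : W → W → ℕ)
    (hfin : ∀ (b : W) (n : ℕ), {a : W | a < b ∧ c a b = n}.Finite)
    (A : Set (Finset W × (W → ℕ)))
    (hcond : ∀ p ∈ A, ∀ a ∈ p.1, ∀ b ∈ p.1, a < b → ¬ (p.2 a = p.2 b ∧ c a b = p.2 a))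
    (hanti : ∀ p ∈ A, ∀ q ∈ A, p ≠ q →
      ¬ ∃ r : Finset W × (W → ℕ),
        (∀ a ∈ r.1, ∀ b ∈ r.1, a < b → ¬ (r.2 a = r.2 b ∧ c a b = r.2 a)) ∧
        (p.1 ⊆ r.1 ∧ ∀ a ∈ p.1, r.2 a = p.2 a) ∧
        (q.1 ⊆ r.1 ∧ ∀ a ∈ q.1, r.2 a = q.2 a)) :
    A.Countable := by
  by_contra hA
  obtain ⟨R, T, hTA, hT, hΔ⟩ := exists_not_countable_isDeltaSystem Prod.fst hA
  obtain ⟨v, hv⟩ := exists_not_countable_fiber hT fun p (a : R) => p.2 a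
  set B := {p ∈ T | (fun a : R => p.2 a) = v}
  have hΔB : IsDeltaSystem Prod.fst B R := Set.Pairwise.mono (fun p hp => hp.1) hΔ
  obtain ⟨p, hp, q, hq, hne, hqp, hpq⟩ := exists_pair_not_rel_of_finite_sections hv
    (fun p q => ∃ a ∈ q.1 \ R, a ∈ conflictSet c p)
    fun p _ => hΔB.finite_meet_sdiff_root (conflictSet_finite c hfin p)
  have hR : p.1 ∩ q.1 = R := hΔB hp hq hne
  have hagree : ∀ a ∈ p.1, a ∈ q.1 → p.2 a = q.2 a := fun a hap haq =>
    congrFun (hp.2.trans hq.2.symm) ⟨a, hR ▸ Finset.mem_inter.2 ⟨hap, haq⟩⟩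
  refine hanti p (hTA hp.1) q (hTA hq.1) hne ⟨amalgam p q,
    isCondition_amalgam c (hcond p (hTA hp.1)) (hcond q (hTA hq.1)) hagree ?_ ?_,
    extends_amalgam_left p q, extends_amalgam_right hagree⟩
  · exact fun a hap haq hac => hpq ⟨a, Finset.mem_sdiff.2 ⟨hap, fun haR =>
      haq (Finset.mem_of_mem_inter_right (hR ▸ haR))⟩, hac⟩
  · exact fun a haq hap hac => hqp ⟨a, Finset.mem_sdiff.2 ⟨haq, fun haR =>
      hap (Finset.mem_of_mem_inter_left (hR ▸ haR))⟩, hac⟩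

/-- Let `c : [ω₁]² → ω` (here `W` is a well-ordered uncountable type all of whose
proper initial segments are countable, i.e. a copy of `ω₁`) have finite-to-one fibres.
Conditions of the poset `ℙ` are pairs `(s, f)` with `s` a finite subset of `W` and
`f` a colouring of `s` (modelled as a total function, only its values on `s` being
relevant) such that no `a < b` in `s` has `f a = f b = c a b`; `r` extends `p` iff
`s^p ⊆ s^r` and the functions agree on `s^p`. Then `ℙ` is ccc: every pairwise
incompatible family of conditions is countable. -/
theorem stmt16 {W : Type*} [LinearOrder W] [WellFoundedLT W] [Uncountable W]
    (hW : ∀ b : W, (Set.Iio b).Countable)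
    (c : W → W → ℕ) (hsymm : ∀ a b, c a b = c b a)
    (hfin : ∀ (b : W) (n : ℕ), {a : W | a < b ∧ c a b = n}.Finite)
    (A : Set (Finset W × (W → ℕ)))
    (hcond : ∀ p ∈ A, ∀ a ∈ p.1, ∀ b ∈ p.1, a < b → ¬ (p.2 a = p.2 b ∧ c a b = p.2 a))
    (hanti : ∀ p ∈ A, ∀ q ∈ A, p ≠ q →
      ¬ ∃ r : Finset W × (W → ℕ),
        (∀ a ∈ r.1, ∀ b ∈ r.1, a < b → ¬ (r.2 a = r.2 b ∧ c a b = r.2 a)) ∧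
        (p.1 ⊆ r.1 ∧ ∀ a ∈ p.1, r.2 a = p.2 a) ∧
        (q.1 ⊆ r.1 ∧ ∀ a ∈ q.1, r.2 a = q.2 a)) :
    A.Countable :=
  stmt16_general c hfin A hcond hanti
end
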